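/- arXiv:1907.04542 — 4 statements merged into one kernel-verified Lean document; each statement's English description precedes it below -/
import Mathlib

section
/- Maximum principle: Assume J satisfies (J), T > 0, g, h ∈ C¹([0,T]) with h(0) = −g(0) = h0 > 0, h strictly increasing and g strictly decreasing. Let D_T = {(t,x): 0 < t ≤ T, g(t) < x < h(t)}. Suppose ψ and ∂t ψ are continuous on the closure of D_T, c ∈ L^∞(D_T), and: ∂t ψ(t,x) ≥ d ∫_{g(t)}^{h(t)} J(x−y) ψ(t,y) dy − d ψ(t,x) + c(t,x) ψ(t,x) for t ∈ (0,T], g(t) < x < h(t); ψ(t, g(t)) ≥ 0 and ψ(t, h(t)) ≥ 0 for t > 0; and ψ(0,x) ≥ 0 for |x| ≤ h0. Then ψ ≥ 0 on the closure of D_T. Moreover, if in addition ψ(0,·) is not identically 0 on [−h0, h0], then ψ > 0 in D_T. -/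
open MeasureTheory Filter

noncomputable section

/-- Condition (J): `J` is continuous, nonnegative, even, `J 0 > 0`,
`∫ J = 1`, and `J` is bounded above. -/
def KernelJ (J : ℝ → ℝ) : Prop :=
  Continuous J ∧ (∀ x, 0 ≤ J x) ∧ (∀ x, J (-x) = J x) ∧ 0 < J 0 ∧
    Integrable J ∧ (∫ x : ℝ, J x) = 1 ∧ BddAbove (Set.range J)

/-- Initial condition (1.3): continuous on `[-h0,h0]`, vanishing at `±h0`,
positive inside. -/
def InitCond (h0 : ℝ) (u0 : ℝ → ℝ) : Prop :=
  ContinuousOn u0 (Set.Icc (-h0) h0) ∧ u0 (-h0) = 0 ∧ u0 h0 = 0 ∧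
    ∀ x ∈ Set.Ioo (-h0) h0, 0 < u0 x

/-- `∫_{gt}^{ht} ∫_{ht}^{∞} J (x - y) u x dy dx`. -/
def fluxR (J : ℝ → ℝ) (u : ℝ → ℝ) (gt ht : ℝ) : ℝ :=
  ∫ x in gt..ht, ∫ y in Set.Ioi ht, J (x - y) * u x

/-- `∫_{gt}^{ht} ∫_{-∞}^{gt} J (x - y) u x dy dx`. -/
def fluxL (J : ℝ → ℝ) (u : ℝ → ℝ) (gt ht : ℝ) : ℝ :=
  ∫ x in gt..ht, ∫ y in Set.Iio gt, J (x - y) * u x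

/-- Condition (f): vanishing at zero density and local Lipschitz continuity. -/
def CondF (f1 f2 : ℝ → ℝ → ℝ → ℝ → ℝ) : Prop :=
  (∀ t x v2, 0 ≤ t → 0 ≤ v2 → f1 t x 0 v2 = 0) ∧
  (∀ t x v1, 0 ≤ t → 0 ≤ v1 → f2 t x v1 0 = 0) ∧
  ∀ K1 K2 : ℝ, 0 < K1 → 0 < K2 → ∃ L > (0:ℝ),
    ∀ t x u1 v1 u2 v2, 0 ≤ t → u1 ∈ Set.Icc (0:ℝ) K1 → v1 ∈ Set.Icc (0:ℝ) K1 →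
      u2 ∈ Set.Icc (0:ℝ) K2 → v2 ∈ Set.Icc (0:ℝ) K2 →
      |f1 t x u1 u2 - f1 t x v1 v2| ≤ L * (|u1 - v1| + |u2 - v2|) ∧
      |f2 t x u1 u2 - f2 t x v1 v2| ≤ L * (|u1 - v1| + |u2 - v2|)

/-- Condition (f1) with constants `k, r`. -/
def CondF1 (f1 : ℝ → ℝ → ℝ → ℝ → ℝ) (k r : ℝ) : Prop :=
  0 < k ∧ 0 < r ∧ ∀ t x u1 u2, 0 ≤ t → 0 ≤ u2 →
    (k < u1 → f1 t x u1 u2 < 0) ∧ (0 < u1 → u1 ≤ k → f1 t x u1 u2 ≤ r * u1)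

/-- Condition (f2) with function `Θ`. -/
def CondF2 (f2 : ℝ → ℝ → ℝ → ℝ → ℝ) (Θ : ℝ → ℝ) : Prop :=
  ∀ K : ℝ, 0 < K → 0 < Θ K ∧
    ∀ t x u1 u2, 0 ≤ t → 0 ≤ u1 → u1 ≤ K → Θ K ≤ u2 → f2 t x u1 u2 < 0

/-- A (global) solution of the free boundary problem (1.2). -/
structure IsSolution (d1 d2 μ1 μ2 h0 : ℝ) (J1 J2 : ℝ → ℝ)
    (f1 f2 : ℝ → ℝ → ℝ → ℝ → ℝ) (u10 u20 : ℝ → ℝ)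
    (u1 u2 : ℝ → ℝ → ℝ) (g h : ℝ → ℝ) : Prop where
  g_zero : g 0 = -h0
  h_zero : h 0 = h0
  cont1 : ContinuousOn (Function.uncurry u1)
    {p : ℝ × ℝ | 0 ≤ p.1 ∧ g p.1 ≤ p.2 ∧ p.2 ≤ h p.1}
  cont2 : ContinuousOn (Function.uncurry u2)
    {p : ℝ × ℝ | 0 ≤ p.1 ∧ g p.1 ≤ p.2 ∧ p.2 ≤ h p.1}
  ext1 : ∀ t x, 0 ≤ t → x ∉ Set.Icc (g t) (h t) → u1 t x = 0
  ext2 : ∀ t x, 0 ≤ t → x ∉ Set.Icc (g t) (h t) → u2 t x = 0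
  pde1 : ∀ t x, 0 < t → x ∈ Set.Ioo (g t) (h t) →
    HasDerivAt (fun τ => u1 τ x)
      (d1 * (∫ y in (g t)..(h t), J1 (x - y) * u1 t y) - d1 * u1 t x
        + f1 t x (u1 t x) (u2 t x)) t
  pde2 : ∀ t x, 0 < t → x ∈ Set.Ioo (g t) (h t) →
    HasDerivAt (fun τ => u2 τ x)
      (d2 * (∫ y in (g t)..(h t), J2 (x - y) * u2 t y) - d2 * u2 t x
        + f2 t x (u1 t x) (u2 t x)) t
  bdry1 : ∀ t, 0 ≤ t → u1 t (g t) = 0 ∧ u1 t (h t) = 0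
  bdry2 : ∀ t, 0 ≤ t → u2 t (g t) = 0 ∧ u2 t (h t) = 0
  fbh : ∀ t, 0 ≤ t → HasDerivWithinAt h
      (μ1 * fluxR J1 (u1 t) (g t) (h t) + μ2 * fluxR J2 (u2 t) (g t) (h t))
      (Set.Ici 0) t
  fbg : ∀ t, 0 ≤ t → HasDerivWithinAt g
      (-(μ1 * fluxL J1 (u1 t) (g t) (h t) + μ2 * fluxL J2 (u2 t) (g t) (h t)))
      (Set.Ici 0) t
  init1 : ∀ x ∈ Set.Icc (-h0) h0, u1 0 x = u10 x
  init2 : ∀ x ∈ Set.Icc (-h0) h0, u2 0 x = u20 x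

/-- Lotka–Volterra growth term for the first species (common to (1.4) and (1.5)). -/
def lvF1 (a1 b1 c1 : ℝ) : ℝ → ℝ → ℝ → ℝ → ℝ :=
  fun _ _ v1 v2 => v1 * (a1 - b1 * v1 - c1 * v2)

/-- Growth term of the second species in the competition model (1.4). -/
def compF2 (a2 b2 c2 : ℝ) : ℝ → ℝ → ℝ → ℝ → ℝ :=
  fun _ _ v1 v2 => v2 * (a2 - b2 * v2 - c2 * v1)

/-- Growth term of the second species in the predator–prey model (1.5). -/
def predF2 (a2 b2 c2 : ℝ) : ℝ → ℝ → ℝ → ℝ → ℝ :=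
  fun _ _ v1 v2 => v2 * (a2 - b2 * v2 + c2 * v1)

/-- Generalized principal eigenvalue of `L^d_{(a,b)} + θ` with kernel `J`. -/
def lambdaP (d : ℝ) (J : ℝ → ℝ) (a b : ℝ) (θ : ℝ → ℝ) : ℝ :=
  sInf {lam : ℝ | ∃ φ : ℝ → ℝ, ContinuousOn φ (Set.Icc a b) ∧
    (∀ x ∈ Set.Icc a b, 0 < φ x) ∧
    ∀ x ∈ Set.Icc a b,
      d * ((∫ y in a..b, J (x - y) * φ y) - φ x) + θ x * φ x ≤ lam * φ x}


/-! For `k > Cb`, the function `e^{-kt} ψ` attains its minimum over the compact closure of `D_T`.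
If the minimum were negative, the initial and boundary conditions would put it at an interior point
with `t > 0`; there `∂ₜ(e^{-kt} ψ) ≤ 0`, while `∫ J (x - y) ψ(t, y) dy ≥ ψ(t, x)` because
`∫ J ≤ 1` and `ψ(t, ·)` is minimal at `x`, and the two contradict the differential inequality.

For the strong principle, at an interior zero of `ψ ≥ 0` we have `∂ₜψ ≤ 0`, so the inequality
forces `∫ J (x - y) ψ(t, y) dy = 0` and `ψ(t, ·)` vanishes wherever `J (x - ·) > 0`, in particular
on a ball of fixed radius `δ` around the zero. By connectedness `ψ(t, ·) ≡ 0` on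
`(g t, h t) ⊇ [-h0, h0]`, and since `e^{(d + Cb) t} ψ(t, x)` is nondecreasing in `t` for
`|x| ≤ h0`, also `ψ(0, ·) ≡ 0` on `[-h0, h0]`. -/

open Set

theorem IsLocalMinOn.hasDerivWithinAt_Icc_nonpos {f : ℝ → ℝ} {f' a b t : ℝ}
    (hmin : IsLocalMinOn f (Icc a b) t) (hf : HasDerivWithinAt f f' (Icc a b) t)
    (ht : t ∈ Ioc a b) : f' ≤ 0 := by
  have hseg : segment ℝ t a ⊆ Icc a b := by
    rw [segment_symm, segment_eq_Icc ht.1.le]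
    exact Icc_subset_Icc_right ht.2
  have := hmin.hasFDerivWithinAt_nonneg hf (sub_mem_posTangentConeAt_of_segment_subset hseg)
  rw [ContinuousLinearMap.toSpanSingleton_apply, smul_eq_mul] at this
  nlinarith [ht.1]

theorem IsPreconnected.forall_of_dist_lt {α : Type*} [PseudoMetricSpace α] {s : Set α}
    (hs : IsPreconnected s) {P : α → Prop} {δ : ℝ} (hδ : 0 < δ)
    (hP : ∀ x ∈ s, ∀ y ∈ s, dist x y < δ → P x → P y) {x₀ : α} (hx₀ : x₀ ∈ s) (h₀ : P x₀) :
    ∀ y ∈ s, P y := by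
  refine fun y hy => (hs.induction₂' (fun x y => P x ↔ P y) (fun x hx => ?_)
    (fun x y z _ _ _ => Iff.trans) hx₀ hy).mp h₀
  filter_upwards [self_mem_nhdsWithin, mem_nhdsWithin_of_mem_nhds (Metric.ball_mem_nhds x hδ)]
    with y hys hyx
  have hxy : dist x y < δ := by rwa [dist_comm]
  exact ⟨⟨hP x hx y hys hxy, hP y hys x hx hyx⟩, ⟨hP y hys x hx hyx, hP x hx y hys hxy⟩⟩

theorem monotoneOn_exp_mul_of_hasDerivWithinAt {f f' : ℝ → ℝ} {a b k : ℝ}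
    (hf : ContinuousOn f (Icc a b)) (hf' : ∀ t ∈ Ioo a b, HasDerivWithinAt f (f' t) (Ioo a b) t)
    (hk : ∀ t ∈ Ioo a b, -(k * f t) ≤ f' t) :
    MonotoneOn (fun t => Real.exp (k * t) * f t) (Icc a b) := by
  refine monotoneOn_of_hasDerivWithinAt_nonneg (f' := fun t => Real.exp (k * t) * (k * f t + f' t))
    (convex_Icc a b) ((Real.continuous_exp.comp (continuous_const_mul k)).continuousOn.mul hf)
    (fun t ht => ?_) (fun t ht => ?_) <;> simp only [interior_Icc] at ht ⊢
  · have hexp : HasDerivAt (fun t => Real.exp (k * t)) (Real.exp (k * t) * k) t := by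
      simpa using ((hasDerivAt_id t).const_mul k).exp
    exact (hexp.hasDerivWithinAt.mul (hf' t ht)).congr_deriv (by ring)
  · exact mul_nonneg (Real.exp_pos _).le (by linarith [hk t ht])

abbrev closedRegionBetween {α : Type*} (f g : α → ℝ) (s : Set α) : Set (α × ℝ) :=
  {p | p.1 ∈ s ∧ f p.1 ≤ p.2 ∧ p.2 ≤ g p.1}

theorem isCompact_closedRegionBetween {α : Type*} [TopologicalSpace α] [T2Space α] {s : Set α}
    (hs : IsCompact s) {f g : α → ℝ} (hf : ContinuousOn f s) (hg : ContinuousOn g s) :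
    IsCompact (closedRegionBetween f g s) := by
  obtain ⟨m, hm⟩ := hs.bddBelow_image hf
  obtain ⟨M, hM⟩ := hs.bddAbove_image hg
  have hclosed : IsClosed (closedRegionBetween f g s) := by
    have h₁ := (hs.isClosed.prod isClosed_univ).isClosed_le
      (hf.comp continuousOn_fst fun p hp => hp.1) continuousOn_snd
    have h₂ := h₁.isClosed_le continuousOn_snd (hg.comp continuousOn_fst fun p hp => hp.1.1)
    convert h₂ using 1
    ext p
    simp [and_assoc]
  refine (hs.prod (isCompact_Icc (a := m) (b := M))).of_isClosed_subset hclosed ?_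
  rintro ⟨t, x⟩ ⟨ht, hfx, hxg⟩
  exact ⟨ht, (hm ⟨t, ht, rfl⟩).trans hfx, hxg.trans (hM ⟨t, ht, rfl⟩)⟩

theorem le_intervalIntegral_kernel_mul {J f : ℝ → ℝ} {a b x m : ℝ} (hab : a ≤ b)
    (hJc : Continuous J) (hJ0 : ∀ u, 0 ≤ J u) (hJ1 : ∫ y in a..b, J (x - y) ≤ 1)
    (hf : ContinuousOn f (Icc a b)) (hm : m ≤ 0) (hfm : ∀ y ∈ Icc a b, m ≤ f y) :
    m ≤ ∫ y in a..b, J (x - y) * f y := by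
  have hJx : Continuous fun y => J (x - y) := by fun_prop
  calc m ≤ (∫ y in a..b, J (x - y)) * m := by nlinarith
    _ = ∫ y in a..b, J (x - y) * m := (intervalIntegral.integral_mul_const m _).symm
    _ ≤ ∫ y in a..b, J (x - y) * f y :=
      intervalIntegral.integral_mono_on hab ((hJx.intervalIntegrable _ _).mul_const m)
        ((hJx.continuousOn.mul hf).intervalIntegrable_of_Icc hab)
        fun y hy => mul_le_mul_of_nonneg_left (hfm y hy) (hJ0 _)

namespace KernelJ

variable {J : ℝ → ℝ}

theorem intervalIntegral_comp_sub_le_one (hJ : KernelJ J) (x : ℝ) {a b : ℝ} (hab : a ≤ b) :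
    ∫ y in a..b, J (x - y) ≤ 1 := by
  rw [intervalIntegral.integral_comp_sub_left J x,
    intervalIntegral.integral_of_le (by linarith : x - b ≤ x - a), ← hJ.2.2.2.2.2.1]
  exact setIntegral_le_integral hJ.2.2.2.2.1 (Filter.Eventually.of_forall hJ.2.1)

theorem exists_pos_of_abs_lt (hJ : KernelJ J) : ∃ δ > 0, ∀ u, |u| < δ → 0 < J u := by
  obtain ⟨δ, hδ, hball⟩ := Metric.eventually_nhds_iff.mp
    (hJ.1.continuousAt.eventually (eventually_gt_nhds hJ.2.2.2.1))
  exact ⟨δ, hδ, fun u hu => hball (by rwa [Real.dist_eq, sub_zero])⟩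

end KernelJ

section Supersolution

variable {T d Cb t₀ x₀ : ℝ} {J g h : ℝ → ℝ} {ψ ψt c : ℝ → ℝ → ℝ}

theorem isLocalMinOn_of_isMinOn_closedRegionBetween {S : Set ℝ} {F : ℝ × ℝ → ℝ}
    (hg : ContinuousOn g S) (hh : ContinuousOn h S)
    (hmin : IsMinOn F (closedRegionBetween g h S) (t₀, x₀)) (ht₀ : t₀ ∈ S)
    (hx₀ : x₀ ∈ Ioo (g t₀) (h t₀)) :
    IsLocalMinOn (fun τ => F (τ, x₀)) S t₀ := by
  filter_upwards [(hg t₀ ht₀).eventually (eventually_lt_nhds hx₀.1),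
    (hh t₀ ht₀).eventually (eventually_gt_nhds hx₀.2), self_mem_nhdsWithin] with τ hgτ hhτ hτ
  exact hmin ⟨hτ, hgτ.le, hhτ.le⟩

theorem ContinuousOn.slice_closedRegionBetween {S : Set ℝ} {t : ℝ}
    (hψ : ContinuousOn (Function.uncurry ψ) (closedRegionBetween g h S)) (ht : t ∈ S) :
    ContinuousOn (ψ t) (Icc (g t) (h t)) :=
  show ContinuousOn (Function.uncurry ψ ∘ fun x => (t, x)) _ from
    hψ.comp (by fun_prop) fun _ hx => ⟨ht, hx⟩

theorem timeDeriv_le_of_isMinOn_exp_mul (k : ℝ) (hg : ContinuousOn g (Icc 0 T))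
    (hh : ContinuousOn h (Icc 0 T))
    (hψt : ∀ t ∈ Icc (0:ℝ) T, ∀ x ∈ Icc (g t) (h t),
      HasDerivWithinAt (fun τ => ψ τ x) (ψt t x) (Icc 0 T) t)
    (hmin : IsMinOn (fun p : ℝ × ℝ => Real.exp (-k * p.1) * ψ p.1 p.2)
      (closedRegionBetween g h (Icc 0 T)) (t₀, x₀))
    (ht₀ : t₀ ∈ Ioc 0 T) (hx₀ : x₀ ∈ Ioo (g t₀) (h t₀)) :
    ψt t₀ x₀ ≤ k * ψ t₀ x₀ := by
  have hexp : HasDerivWithinAt (fun τ => Real.exp (-k * τ)) (Real.exp (-k * t₀) * -k)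
      (Icc 0 T) t₀ := by
    simpa using ((hasDerivAt_id t₀).const_mul (-k)).exp.hasDerivWithinAt
  have hderiv := hexp.mul (hψt t₀ (Ioc_subset_Icc_self ht₀) x₀ (Ioo_subset_Icc_self hx₀))
  have hnonpos := (isLocalMinOn_of_isMinOn_closedRegionBetween hg hh hmin
    (Ioc_subset_Icc_self ht₀) hx₀).hasDerivWithinAt_Icc_nonpos hderiv ht₀
  nlinarith [Real.exp_pos (-k * t₀)]

theorem mem_Icc_of_monotoneOn_of_antitoneOn {x t : ℝ} (hhmono : MonotoneOn h (Icc 0 T))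
    (hgmono : AntitoneOn g (Icc 0 T)) (hx : x ∈ Icc (g 0) (h 0)) (ht : t ∈ Icc 0 T) :
    x ∈ Icc (g t) (h t) :=
  have h0 : (0:ℝ) ∈ Icc 0 T := ⟨le_rfl, ht.1.trans ht.2⟩
  ⟨(hgmono h0 ht ht.1).trans hx.1, hx.2.trans (hhmono h0 ht ht.1)⟩

theorem mem_Ioo_of_strictMonoOn_of_strictAntiOn {x t : ℝ} (hhmono : StrictMonoOn h (Icc 0 T))
    (hgmono : StrictAntiOn g (Icc 0 T)) (hx : x ∈ Icc (g 0) (h 0)) (ht : t ∈ Ioc 0 T) :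
    x ∈ Ioo (g t) (h t) :=
  have h0 : (0:ℝ) ∈ Icc 0 T := ⟨le_rfl, ht.1.le.trans ht.2⟩
  ⟨(hgmono h0 (Ioc_subset_Icc_self ht) ht.1).trans_le hx.1,
    hx.2.trans_lt (hhmono h0 (Ioc_subset_Icc_self ht) ht.1)⟩

theorem nonneg_of_supersolution (hg : ContinuousOn g (Icc 0 T)) (hh : ContinuousOn h (Icc 0 T))
    (hJ : KernelJ J) (hd : 0 ≤ d)
    (hψcont : ContinuousOn (Function.uncurry ψ) (closedRegionBetween g h (Icc 0 T)))
    (hψt : ∀ t ∈ Icc (0:ℝ) T, ∀ x ∈ Icc (g t) (h t),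
      HasDerivWithinAt (fun τ => ψ τ x) (ψt t x) (Icc 0 T) t)
    (hc : ∀ t ∈ Ioc (0:ℝ) T, ∀ x ∈ Ioo (g t) (h t), c t x ≤ Cb)
    (hineq : ∀ t ∈ Ioc (0:ℝ) T, ∀ x ∈ Ioo (g t) (h t),
      d * (∫ y in (g t)..(h t), J (x - y) * ψ t y) - d * ψ t x + c t x * ψ t x ≤ ψt t x)
    (hbg : ∀ t ∈ Ioc (0:ℝ) T, 0 ≤ ψ t (g t)) (hbh : ∀ t ∈ Ioc (0:ℝ) T, 0 ≤ ψ t (h t))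
    (hinit : ∀ x ∈ Icc (g 0) (h 0), 0 ≤ ψ 0 x) :
    ∀ t ∈ Icc (0:ℝ) T, ∀ x ∈ Icc (g t) (h t), 0 ≤ ψ t x := by
  by_contra! ⟨t₁, ht₁, x₁, hx₁, hψ₁⟩
  set k := Cb + 1
  have hp₁ : (t₁, x₁) ∈ closedRegionBetween g h (Icc 0 T) := ⟨ht₁, hx₁⟩
  have hw : ContinuousOn (fun p : ℝ × ℝ => Real.exp (-k * p.1) * ψ p.1 p.2)
      (closedRegionBetween g h (Icc 0 T)) :=
    (Real.continuous_exp.comp (continuous_const.mul continuous_fst)).continuousOn.mul hψcont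
  obtain ⟨⟨t₀, x₀⟩, hp₀, hmin⟩ :=
    (isCompact_closedRegionBetween isCompact_Icc hg hh).exists_isMinOn ⟨_, hp₁⟩ hw
  obtain ⟨ht₀, hx₀⟩ : t₀ ∈ Icc 0 T ∧ x₀ ∈ Icc (g t₀) (h t₀) := hp₀
  have hψ₀ : ψ t₀ x₀ < 0 := by
    have : Real.exp (-k * t₀) * ψ t₀ x₀ ≤ Real.exp (-k * t₁) * ψ t₁ x₁ := hmin hp₁
    nlinarith [Real.exp_pos (-k * t₀), Real.exp_pos (-k * t₁)]
  have ht₀' : t₀ ∈ Ioc 0 T :=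
    ⟨ht₀.1.lt_of_ne (by rintro rfl; exact (hinit x₀ hx₀).not_gt hψ₀), ht₀.2⟩
  have hx₀' : x₀ ∈ Ioo (g t₀) (h t₀) :=
    ⟨hx₀.1.lt_of_ne (by rintro rfl; exact (hbg t₀ ht₀').not_gt hψ₀),
      hx₀.2.lt_of_ne (by rintro rfl; exact (hbh t₀ ht₀').not_gt hψ₀)⟩
  have hderiv : ψt t₀ x₀ ≤ k * ψ t₀ x₀ :=
    timeDeriv_le_of_isMinOn_exp_mul k hg hh hψt hmin ht₀' hx₀'
  have hsliceMin : ∀ y ∈ Icc (g t₀) (h t₀), ψ t₀ x₀ ≤ ψ t₀ y := fun y hy =>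
    le_of_mul_le_mul_left (hmin (show (t₀, y) ∈ _ from ⟨ht₀, hy⟩)) (Real.exp_pos _)
  have hint : ψ t₀ x₀ ≤ ∫ y in (g t₀)..(h t₀), J (x₀ - y) * ψ t₀ y :=
    le_intervalIntegral_kernel_mul (hx₀.1.trans hx₀.2) hJ.1 hJ.2.1
      (hJ.intervalIntegral_comp_sub_le_one x₀ (hx₀.1.trans hx₀.2))
      (hψcont.slice_closedRegionBetween ht₀) hψ₀.le hsliceMin
  have := hineq t₀ ht₀' x₀ hx₀'
  have := hc t₀ ht₀' x₀ hx₀'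
  nlinarith

theorem eq_zero_of_kernel_pos_of_eq_zero (hg : ContinuousOn g (Icc 0 T))
    (hh : ContinuousOn h (Icc 0 T)) (hJ : KernelJ J) (hd : 0 < d)
    (hψcont : ContinuousOn (Function.uncurry ψ) (closedRegionBetween g h (Icc 0 T)))
    (hψt : ∀ t ∈ Icc (0:ℝ) T, ∀ x ∈ Icc (g t) (h t),
      HasDerivWithinAt (fun τ => ψ τ x) (ψt t x) (Icc 0 T) t)
    (hineq : ∀ t ∈ Ioc (0:ℝ) T, ∀ x ∈ Ioo (g t) (h t),
      d * (∫ y in (g t)..(h t), J (x - y) * ψ t y) - d * ψ t x + c t x * ψ t x ≤ ψt t x)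
    (hnonneg : ∀ t ∈ Icc (0:ℝ) T, ∀ x ∈ Icc (g t) (h t), 0 ≤ ψ t x)
    (ht₀ : t₀ ∈ Ioc 0 T) (hx₀ : x₀ ∈ Ioo (g t₀) (h t₀)) (hzero : ψ t₀ x₀ = 0)
    {y : ℝ} (hy : y ∈ Icc (g t₀) (h t₀)) (hJy : 0 < J (x₀ - y)) : ψ t₀ y = 0 := by
  have hmin : IsMinOn (fun p : ℝ × ℝ => Real.exp (-0 * p.1) * ψ p.1 p.2)
      (closedRegionBetween g h (Icc 0 T)) (t₀, x₀) := fun p hp => by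
    simpa [hzero] using hnonneg p.1 hp.1 p.2 hp.2
  have hderiv := timeDeriv_le_of_isMinOn_exp_mul 0 hg hh hψt hmin ht₀ hx₀
  have hint : ∫ u in (g t₀)..(h t₀), J (x₀ - u) * ψ t₀ u ≤ 0 := by
    have := hineq t₀ ht₀ x₀ hx₀
    rw [hzero] at this hderiv
    nlinarith
  have ht₀' := Ioc_subset_Icc_self ht₀
  refine ((hnonneg t₀ ht₀' y hy).eq_or_lt.resolve_right fun hpos => hint.not_gt ?_).symm
  exact intervalIntegral.integral_pos (hx₀.1.trans hx₀.2)
    ((hJ.1.comp (continuous_const.sub continuous_id)).continuousOn.mul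
      (hψcont.slice_closedRegionBetween ht₀'))
    (fun u hu => mul_nonneg (hJ.2.1 _) (hnonneg t₀ ht₀' u (Ioc_subset_Icc_self hu)))
    ⟨y, hy, mul_pos hJy hpos⟩

theorem slice_eq_zero_of_eq_zero (hg : ContinuousOn g (Icc 0 T))
    (hh : ContinuousOn h (Icc 0 T)) (hJ : KernelJ J) (hd : 0 < d)
    (hψcont : ContinuousOn (Function.uncurry ψ) (closedRegionBetween g h (Icc 0 T)))
    (hψt : ∀ t ∈ Icc (0:ℝ) T, ∀ x ∈ Icc (g t) (h t),
      HasDerivWithinAt (fun τ => ψ τ x) (ψt t x) (Icc 0 T) t)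
    (hineq : ∀ t ∈ Ioc (0:ℝ) T, ∀ x ∈ Ioo (g t) (h t),
      d * (∫ y in (g t)..(h t), J (x - y) * ψ t y) - d * ψ t x + c t x * ψ t x ≤ ψt t x)
    (hnonneg : ∀ t ∈ Icc (0:ℝ) T, ∀ x ∈ Icc (g t) (h t), 0 ≤ ψ t x)
    (ht₀ : t₀ ∈ Ioc 0 T) (hx₀ : x₀ ∈ Ioo (g t₀) (h t₀)) (hzero : ψ t₀ x₀ = 0) :
    ∀ y ∈ Ioo (g t₀) (h t₀), ψ t₀ y = 0 := by
  obtain ⟨δ, hδ, hJδ⟩ := hJ.exists_pos_of_abs_lt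
  refine isPreconnected_Ioo.forall_of_dist_lt hδ (fun z hz y hy hzy hz₀ => ?_) hx₀ hzero
  exact eq_zero_of_kernel_pos_of_eq_zero hg hh hJ hd hψcont hψt hineq hnonneg ht₀ hz hz₀
    (Ioo_subset_Icc_self hy) (hJδ _ (by rwa [← Real.dist_eq]))

theorem le_exp_mul_of_supersolution (hJ0 : ∀ u, 0 ≤ J u) (hd : 0 ≤ d)
    (hψt : ∀ t ∈ Icc (0:ℝ) T, ∀ x ∈ Icc (g t) (h t),
      HasDerivWithinAt (fun τ => ψ τ x) (ψt t x) (Icc 0 T) t)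
    (hc : ∀ t ∈ Ioc (0:ℝ) T, ∀ x ∈ Ioo (g t) (h t), -Cb ≤ c t x)
    (hineq : ∀ t ∈ Ioc (0:ℝ) T, ∀ x ∈ Ioo (g t) (h t),
      d * (∫ y in (g t)..(h t), J (x - y) * ψ t y) - d * ψ t x + c t x * ψ t x ≤ ψt t x)
    (hnonneg : ∀ t ∈ Icc (0:ℝ) T, ∀ x ∈ Icc (g t) (h t), 0 ≤ ψ t x)
    (ht₀ : t₀ ∈ Icc 0 T) {x : ℝ} (hx : ∀ τ ∈ Icc 0 t₀, x ∈ Icc (g τ) (h τ))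
    (hx' : ∀ τ ∈ Ioo 0 t₀, x ∈ Ioo (g τ) (h τ)) :
    ψ 0 x ≤ Real.exp ((d + Cb) * t₀) * ψ t₀ x := by
  have hsub : Icc 0 t₀ ⊆ Icc 0 T := Icc_subset_Icc_right ht₀.2
  have hsub' : Ioo 0 t₀ ⊆ Icc 0 T := Ioo_subset_Icc_self.trans hsub
  have hgrowth : ∀ τ ∈ Ioo 0 t₀, -((d + Cb) * ψ τ x) ≤ ψt τ x := fun τ hτ => by
    have hτ' : τ ∈ Ioc 0 T := ⟨hτ.1, hτ.2.le.trans ht₀.2⟩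
    have hI : 0 ≤ ∫ y in (g τ)..(h τ), J (x - y) * ψ τ y :=
      intervalIntegral.integral_nonneg ((hx' τ hτ).1.trans (hx' τ hτ).2).le
        fun y hy => mul_nonneg (hJ0 _) (hnonneg τ (hsub' hτ) y hy)
    have := hineq τ hτ' x (hx' τ hτ)
    have := hc τ hτ' x (hx' τ hτ)
    have := hnonneg τ (hsub' hτ) x (Ioo_subset_Icc_self (hx' τ hτ))
    nlinarith
  have hmono := monotoneOn_exp_mul_of_hasDerivWithinAt (f := fun τ => ψ τ x)
    (fun τ hτ => (hψt τ (hsub hτ) x (hx τ hτ)).continuousWithinAt.mono hsub)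
    (fun τ hτ => (hψt τ (hsub' hτ) x (hx τ (Ioo_subset_Icc_self hτ))).mono hsub') hgrowth
  simpa using hmono ⟨le_rfl, ht₀.1⟩ ⟨ht₀.1, le_rfl⟩ ht₀.1

end Supersolution

theorem maximum_principle_general
    (T d h0 : ℝ) (J : ℝ → ℝ) (g h : ℝ → ℝ) (ψ ψt c : ℝ → ℝ → ℝ) (Cb : ℝ)
    (hd : 0 < d) (hJ : KernelJ J)
    (hgC1 : ContDiffOn ℝ 1 g (Set.Icc 0 T)) (hhC1 : ContDiffOn ℝ 1 h (Set.Icc 0 T))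
    (hg0 : g 0 = -h0) (hh0eq : h 0 = h0)
    (hhmono : StrictMonoOn h (Set.Icc 0 T)) (hgmono : StrictAntiOn g (Set.Icc 0 T))
    (hψcont : ContinuousOn (Function.uncurry ψ)
      {p : ℝ × ℝ | p.1 ∈ Set.Icc 0 T ∧ g p.1 ≤ p.2 ∧ p.2 ≤ h p.1})
    (hψt : ∀ t ∈ Set.Icc (0:ℝ) T, ∀ x ∈ Set.Icc (g t) (h t),
      HasDerivWithinAt (fun τ => ψ τ x) (ψt t x) (Set.Icc 0 T) t)
    (hc : ∀ t ∈ Set.Ioc (0:ℝ) T, ∀ x ∈ Set.Ioo (g t) (h t), |c t x| ≤ Cb)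
    (hineq : ∀ t ∈ Set.Ioc (0:ℝ) T, ∀ x ∈ Set.Ioo (g t) (h t),
      d * (∫ y in (g t)..(h t), J (x - y) * ψ t y) - d * ψ t x + c t x * ψ t x
        ≤ ψt t x)
    (hbg : ∀ t ∈ Set.Ioc (0:ℝ) T, 0 ≤ ψ t (g t))
    (hbh : ∀ t ∈ Set.Ioc (0:ℝ) T, 0 ≤ ψ t (h t))
    (hinit : ∀ x ∈ Set.Icc (-h0) h0, 0 ≤ ψ 0 x) :
    (∀ t ∈ Set.Icc (0:ℝ) T, ∀ x ∈ Set.Icc (g t) (h t), 0 ≤ ψ t x) ∧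
    ((∃ x ∈ Set.Icc (-h0) h0, ψ 0 x ≠ 0) →
      ∀ t ∈ Set.Ioc (0:ℝ) T, ∀ x ∈ Set.Ioo (g t) (h t), 0 < ψ t x) := by
  have hg := hgC1.continuousOn
  have hh := hhC1.continuousOn
  rw [← hg0, ← hh0eq] at hinit ⊢
  have hnonneg := nonneg_of_supersolution hg hh hJ hd.le hψcont hψt
    (fun t ht x hx => (abs_le.mp (hc t ht x hx)).2) hineq hbg hbh hinit
  refine ⟨hnonneg, ?_⟩
  rintro ⟨x₁, hx₁, hne⟩ t₀ ht₀ x₀ hx₀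
  refine (hnonneg t₀ (Ioc_subset_Icc_self ht₀) x₀ (Ioo_subset_Icc_self hx₀)).lt_of_ne'
    fun hzero => hne (le_antisymm ?_ (hinit x₁ hx₁))
  have hback := le_exp_mul_of_supersolution hJ.2.1 hd.le hψt
    (fun t ht x hx => (abs_le.mp (hc t ht x hx)).1) hineq hnonneg (Ioc_subset_Icc_self ht₀)
    (fun τ hτ => mem_Icc_of_monotoneOn_of_antitoneOn hhmono.monotoneOn hgmono.antitoneOn hx₁
      (Icc_subset_Icc_right ht₀.2 hτ))
    (fun τ hτ => mem_Ioo_of_strictMonoOn_of_strictAntiOn hhmono hgmono hx₁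
      ⟨hτ.1, hτ.2.le.trans ht₀.2⟩)
  rwa [slice_eq_zero_of_eq_zero hg hh hJ hd hψcont hψt hineq hnonneg ht₀ hx₀ hzero x₁
    (mem_Ioo_of_strictMonoOn_of_strictAntiOn hhmono hgmono hx₁ ht₀), mul_zero] at hback

/-- Lemma 2.2, maximum principle for the nonlocal operator on a
moving domain. -/
theorem maximum_principle
    (T d h0 : ℝ) (J : ℝ → ℝ) (g h : ℝ → ℝ) (ψ ψt c : ℝ → ℝ → ℝ) (Cb : ℝ)
    (hT : 0 < T) (hd : 0 < d) (hh0 : 0 < h0) (hJ : KernelJ J)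
    (hgC1 : ContDiffOn ℝ 1 g (Set.Icc 0 T)) (hhC1 : ContDiffOn ℝ 1 h (Set.Icc 0 T))
    (hg0 : g 0 = -h0) (hh0eq : h 0 = h0)
    (hhmono : StrictMonoOn h (Set.Icc 0 T)) (hgmono : StrictAntiOn g (Set.Icc 0 T))
    (hψcont : ContinuousOn (Function.uncurry ψ)
      {p : ℝ × ℝ | p.1 ∈ Set.Icc 0 T ∧ g p.1 ≤ p.2 ∧ p.2 ≤ h p.1})
    (hψtcont : ContinuousOn (Function.uncurry ψt)
      {p : ℝ × ℝ | p.1 ∈ Set.Icc 0 T ∧ g p.1 ≤ p.2 ∧ p.2 ≤ h p.1})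
    (hψt : ∀ t ∈ Set.Icc (0:ℝ) T, ∀ x ∈ Set.Icc (g t) (h t),
      HasDerivWithinAt (fun τ => ψ τ x) (ψt t x) (Set.Icc 0 T) t)
    (hc : ∀ t ∈ Set.Ioc (0:ℝ) T, ∀ x ∈ Set.Ioo (g t) (h t), |c t x| ≤ Cb)
    (hineq : ∀ t ∈ Set.Ioc (0:ℝ) T, ∀ x ∈ Set.Ioo (g t) (h t),
      d * (∫ y in (g t)..(h t), J (x - y) * ψ t y) - d * ψ t x + c t x * ψ t x
        ≤ ψt t x)
    (hbg : ∀ t ∈ Set.Ioc (0:ℝ) T, 0 ≤ ψ t (g t))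
    (hbh : ∀ t ∈ Set.Ioc (0:ℝ) T, 0 ≤ ψ t (h t))
    (hinit : ∀ x ∈ Set.Icc (-h0) h0, 0 ≤ ψ 0 x) :
    (∀ t ∈ Set.Icc (0:ℝ) T, ∀ x ∈ Set.Icc (g t) (h t), 0 ≤ ψ t x) ∧
    ((∃ x ∈ Set.Icc (-h0) h0, ψ 0 x ≠ 0) →
      ∀ t ∈ Set.Ioc (0:ℝ) T, ∀ x ∈ Set.Ioo (g t) (h t), 0 < ψ t x) :=
  maximum_principle_general T d h0 J g h ψ ψt c Cb hd hJ hgC1 hhC1 hg0 hh0eq hhmono hgmono hψcont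
    hψt hc hineq hbg hbh hinit
end
end

section
/- Assume J1 and J2 satisfy (J) with in addition J1(x) > 0 and J2(x) > 0 for all x ∈ ℝ, and (f1, f2) is given by either the competition model (1.4) or the predator–prey model (1.5). Let (u1, u2, g, h) be the unique global solution of problem (1.2), with g_∞ := lim_{t→∞} g(t) and h_∞ := lim_{t→∞} h(t). If a1 ≥ d1 or a2 ≥ d2, then necessarily h_∞ − g_∞ = ∞, i.e., spreading always happens. -/
open MeasureTheory Filter

noncomputable section

/-!
Both densities stay nonnegative by an exponentially weighted minimum principle, so the fluxes
are nonnegative and `h` increases while `g` decreases. Suppose the habitat stays bounded, say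
`h ≤ R`. Since `J > 0`, the outward flux of each species through `h` is at least a positive
multiple of its mass on `(-h0, h0)`; as `h' ≥ μ · flux` and `h` is bounded, that mass is
integrable in time, and by Fubini both densities are time-integrable at some `x₀ ∈ (-h0, h0)`.
At `x₀` the species with `a ≥ d` satisfies `u' ≥ -(b u + c v) u` (the dispersal loss `d u` is
paid for by `a u`), so by Grönwall `u(t, x₀) ≥ u(0, x₀) exp (-∫₀^∞ (b u + c v)) > 0` for all `t`,
contradicting its integrability.
-/

open Set

theorem HasDerivAt.nonpos_of_isMinOn_Icc {f : ℝ → ℝ} {f' a b : ℝ} (hab : a < b)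
    (hf : HasDerivAt f f' b) (hmin : IsMinOn f (Icc a b) b) : f' ≤ 0 := by
  have hcone : a - b ∈ posTangentConeAt (Icc a b) b :=
    sub_mem_posTangentConeAt_of_segment_subset (by rw [segment_symm, segment_eq_Icc hab.le])
  have := hmin.localize.hasFDerivWithinAt_nonneg hf.hasFDerivAt.hasFDerivWithinAt hcone
  simp only [ContinuousLinearMap.toSpanSingleton_apply, smul_eq_mul] at this
  nlinarith

theorem continuousOn_integral_Ici {β : ℝ → ℝ} (hβ : ContinuousOn β (Ici 0)) :
    ContinuousOn (fun t => ∫ s in (0 : ℝ)..t, β s) (Ici 0) := by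
  intro t ht
  have hint : IntervalIntegrable β volume (min 0 0) (max 0 (t + 1)) :=
    (hβ.mono fun s hs => by simp_all [uIcc]).intervalIntegrable
  refine (intervalIntegral.continuousWithinAt_primitive Real.volume_singleton hint)
    |>.mono_of_mem_nhdsWithin ?_
  rw [← Ici_inter_Iic]
  exact inter_mem_nhdsWithin _ (Iic_mem_nhds (by linarith))

theorem hasDerivAt_integral_of_continuousOn_Ici {β : ℝ → ℝ} (hβ : ContinuousOn β (Ici 0))
    {t : ℝ} (ht : 0 < t) : HasDerivAt (fun t => ∫ s in (0 : ℝ)..t, β s) (β t) t :=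
  intervalIntegral.integral_hasDerivAt_right
    (hβ.mono fun s hs => by rw [uIcc_of_le ht.le] at hs; exact hs.1).intervalIntegrable
    (hβ.mono Ioi_subset_Ici_self |>.stronglyMeasurableAtFilter isOpen_Ioi t ht)
    (hβ.continuousAt (Ici_mem_nhds ht))

theorem mul_exp_neg_integral_le_of_hasDerivAt {ψ ψ' β : ℝ → ℝ} (hψ : ContinuousOn ψ (Ici 0))
    (hβ : ContinuousOn β (Ici 0)) (hψ' : ∀ t > 0, HasDerivAt ψ (ψ' t) t)
    (hle : ∀ t > 0, -(β t * ψ t) ≤ ψ' t) {t : ℝ} (ht : 0 ≤ t) :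
    ψ 0 * Real.exp (-∫ s in (0 : ℝ)..t, β s) ≤ ψ t := by
  set B : ℝ → ℝ := fun t => ∫ s in (0 : ℝ)..t, β s
  have hmono : MonotoneOn (fun t => ψ t * Real.exp (B t)) (Ici 0) := by
    refine monotoneOn_of_hasDerivWithinAt_nonneg
      (f' := fun s => ψ' s * Real.exp (B s) + ψ s * (Real.exp (B s) * β s)) (convex_Ici 0)
      (hψ.mul (continuousOn_integral_Ici hβ).rexp) (fun s hs => ?_) (fun s hs => ?_)
    · rw [interior_Ici] at hs
      exact ((hψ' s hs).mul (hasDerivAt_integral_of_continuousOn_Ici hβ hs).exp).hasDerivWithinAt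
    · rw [interior_Ici] at hs
      nlinarith [hle s hs, Real.exp_pos (B s)]
  have h0t := hmono self_mem_Ici ht ht
  simp only [B, intervalIntegral.integral_same, Real.exp_zero, mul_one] at h0t
  calc ψ 0 * Real.exp (-B t) ≤ ψ t * Real.exp (B t) * Real.exp (-B t) := by
        gcongr
    _ = ψ t := by rw [mul_assoc, ← Real.exp_add, add_neg_cancel, Real.exp_zero, mul_one]

theorem not_integrableOn_Ioi_of_hasDerivAt_ge {ψ ψ' β : ℝ → ℝ} (hψ : ContinuousOn ψ (Ici 0))
    (hβ : ContinuousOn β (Ici 0)) (hβ₀ : ∀ t > 0, 0 ≤ β t) (hβi : IntegrableOn β (Ioi 0))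
    (hψ' : ∀ t > 0, HasDerivAt ψ (ψ' t) t) (hle : ∀ t > 0, -(β t * ψ t) ≤ ψ' t)
    (hψ₀ : 0 < ψ 0) : ¬IntegrableOn ψ (Ioi 0) := by
  intro hψi
  have hε : ∀ t ∈ Ioi (0 : ℝ), ψ 0 * Real.exp (-∫ s in Ioi 0, β s) ≤ ψ t := fun t ht =>
    calc ψ 0 * Real.exp (-∫ s in Ioi 0, β s) ≤ ψ 0 * Real.exp (-∫ s in (0 : ℝ)..t, β s) := by
          gcongr
          rw [intervalIntegral.integral_of_le (le_of_lt ht)]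
          exact setIntegral_mono_set hβi (ae_restrict_of_forall_mem measurableSet_Ioi hβ₀)
            Ioc_subset_Ioi_self.eventuallyLE
      _ ≤ ψ t := mul_exp_neg_integral_le_of_hasDerivAt hψ hβ hψ' hle (le_of_lt ht)
  have hεi := hψi.mono' continuous_const.aestronglyMeasurable
    (ae_restrict_of_forall_mem measurableSet_Ioi fun t ht =>
      (Real.norm_of_nonneg (by positivity)).trans_le (hε t ht))
  rw [integrable_const_iff] at hεi
  simp [hψ₀.ne', isFiniteMeasure_restrict] at hεi

theorem pos_of_hasDerivWithinAt_nonneg_of_pos {f f' : ℝ → ℝ}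
    (hf : ∀ t ≥ 0, HasDerivWithinAt f (f' t) (Ici 0) t) (hf₀ : 0 < f 0)
    (hf' : ∀ t ≥ 0, 0 < f t → 0 ≤ f' t) {t : ℝ} (ht : 0 ≤ t) : 0 < f t := by
  -- compare `f` with the positive barrier `f 0 * exp (-x)`, whose derivative is negative
  have hbarrier : ∀ x, HasDerivAt (fun x => -(f 0 * Real.exp (-x))) (f 0 * Real.exp (-x)) x :=
    fun x => (((hasDerivAt_neg x).exp.const_mul (f 0)).neg).congr_deriv (by ring)
  have hcmp := image_le_of_deriv_right_lt_deriv_boundary (f := -f) (a := 0) (b := t)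
    (fun x hx => (hf x hx.1).continuousWithinAt.neg.mono Icc_subset_Ici_self)
    (fun x hx => (hf x hx.1).neg.mono (Ici_subset_Ici.2 hx.1)) (by simp) hbarrier
    (fun x hx hfx => by
      have hpos : 0 < f x := by
        simp only [Pi.neg_apply, neg_inj] at hfx
        rw [hfx]; positivity
      have := hf' x hx.1 hpos
      nlinarith [Real.exp_pos (-x)])
    ⟨ht, le_rfl⟩
  simp only [Pi.neg_apply, neg_le_neg_iff] at hcmp
  exact hcmp.trans_lt' (by positivity)

theorem integrableOn_Ioi_of_le_hasDerivWithinAt {F F' E : ℝ → ℝ} {M : ℝ}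
    (hF : ∀ t ≥ 0, HasDerivWithinAt F (F' t) (Ici 0) t) (hM : ∀ t ≥ 0, F t ≤ M)
    (hE₀ : ∀ t ≥ 0, 0 ≤ E t) (hEi : ∀ T, IntegrableOn E (Icc 0 T)) (hEF : ∀ t > 0, E t ≤ F' t) :
    IntegrableOn E (Ioi 0) := by
  refine integrableOn_Ioi_of_intervalIntegral_norm_bounded (M - F 0) 0
    (fun T => (hEi T).mono_set Ioc_subset_Icc_self) tendsto_id ?_
  filter_upwards [eventually_ge_atTop 0] with T hT
  calc ∫ t in (0 : ℝ)..T, ‖E t‖ = ∫ t in (0 : ℝ)..T, E t :=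
        intervalIntegral.integral_congr fun t ht =>
          Real.norm_of_nonneg (hE₀ t (by rw [uIcc_of_le hT] at ht; exact ht.1))
    _ ≤ F T - F 0 := intervalIntegral.integral_le_sub_of_hasDeriv_right_of_le hT
        (fun t ht => (hF t ht.1).continuousWithinAt.mono Icc_subset_Ici_self)
        (fun t ht => (hF t ht.1.le).mono (Ioi_subset_Ici_self.trans (Ici_subset_Ici.2 ht.1.le)))
        (hEi T) (fun t ht => hEF t ht.1)
    _ ≤ M - F 0 := by linarith [hM T hT]

theorem ae_integrableOn_of_integrableOn_setIntegral {U : ℝ × ℝ → ℝ} {A B : Set ℝ}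
    (hA : MeasurableSet A) (hB : MeasurableSet B) (hU : ContinuousOn U (A ×ˢ B))
    (hU₀ : ∀ p ∈ A ×ˢ B, 0 ≤ U p) (hslice : ∀ t ∈ A, IntegrableOn (fun x => U (t, x)) B)
    (hmass : IntegrableOn (fun t => ∫ x in B, U (t, x)) A) :
    ∀ᵐ x ∂volume.restrict B, IntegrableOn (fun t => U (t, x)) A := by
  have hmeas : AEStronglyMeasurable U ((volume.restrict A).prod (volume.restrict B)) := by
    rw [Measure.prod_restrict, ← Measure.volume_eq_prod]
    exact hU.aestronglyMeasurable (hA.prod hB)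
  refine Integrable.prod_left_ae ((integrable_prod_iff hmeas).2
    ⟨ae_restrict_of_forall_mem hA hslice, hmass.congr_fun (fun t ht => ?_) hA⟩)
  exact setIntegral_congr_fun hB fun x hx => (Real.norm_of_nonneg (hU₀ _ ⟨ht, hx⟩)).symm

theorem MonotoneOn.exists_forall_le_of_not_tendsto_atTop {f : ℝ → ℝ}
    (hf : MonotoneOn f (Ici 0)) (hnt : ¬Tendsto f atTop atTop) : ∃ M, ∀ t ≥ 0, f t ≤ M := by
  by_contra! hunb
  refine hnt (tendsto_atTop_atTop.2 fun M => ?_)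
  obtain ⟨t, ht, hMt⟩ := hunb M
  exact ⟨t, fun s hs => hMt.le.trans (hf ht (ht.trans hs) hs)⟩

section Kernel

variable {J : ℝ → ℝ}

theorem setIntegral_comp_sub_le_one (hJ₀ : ∀ z, 0 ≤ J z) (hJi : Integrable J)
    (hJ₁ : ∫ z, J z = 1) (S : Set ℝ) (x : ℝ) : ∫ y in S, J (x - y) ≤ 1 :=
  calc ∫ y in S, J (x - y) ≤ ∫ y, J (x - y) :=
        setIntegral_le_integral ((integrable_comp_sub_left J x).2 hJi) (ae_of_all _ fun _ => hJ₀ _)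
    _ = 1 := by rw [integral_sub_left_eq_self J volume x, hJ₁]

theorem le_intervalIntegral_comp_sub_mul (hJc : Continuous J) (hJ₀ : ∀ z, 0 ≤ J z)
    (hJi : Integrable J) (hJ₁ : ∫ z, J z = 1) {u : ℝ → ℝ} {a b x m : ℝ} (hab : a ≤ b)
    (hu : ContinuousOn u (Icc a b)) (hm : m ≤ 0) (hum : ∀ y ∈ Icc a b, m ≤ u y) :
    m ≤ ∫ y in a..b, J (x - y) * u y := by
  have hJx : Continuous fun y => J (x - y) := hJc.comp (continuous_const.sub continuous_id)
  have hmass : (∫ y in a..b, J (x - y)) ≤ 1 := by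
    rw [intervalIntegral.integral_of_le hab]
    exact setIntegral_comp_sub_le_one hJ₀ hJi hJ₁ _ x
  calc m ≤ (∫ y in a..b, J (x - y)) * m := by nlinarith
    _ = ∫ y in a..b, J (x - y) * m := (intervalIntegral.integral_mul_const m _).symm
    _ ≤ ∫ y in a..b, J (x - y) * u y :=
        intervalIntegral.integral_mono_on hab ((hJx.mul continuous_const).intervalIntegrable _ _)
          (hJx.continuousOn.mul (by rwa [uIcc_of_le hab])).intervalIntegrable
          fun y hy => mul_le_mul_of_nonneg_left (hum y hy) (hJ₀ _)

theorem exists_pos_le_integral_Ioi_comp_sub (hJc : Continuous J) (hJpos : ∀ z, 0 < J z)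
    (hJi : Integrable J) (R : ℝ) :
    ∃ c > 0, ∀ x y, -R ≤ x → x ≤ y → y ≤ R → c ≤ ∫ z in Ioi y, J (x - z) := by
  obtain ⟨z₀, -, hz₀⟩ := isCompact_uIcc.exists_isMinOn nonempty_uIcc
    (hJc.continuousOn (s := uIcc (-(2 * R + 1)) 0))
  refine ⟨J z₀, hJpos z₀, fun x y hx hxy hy => ?_⟩
  have hint : Integrable fun z => J (x - z) := (integrable_comp_sub_left J x).2 hJi
  calc J z₀ = ∫ _ in Ioc y (y + 1), J z₀ := by simp
    _ ≤ ∫ z in Ioc y (y + 1), J (x - z) :=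
        setIntegral_mono_on (integrableOn_const (by simp)) hint.integrableOn measurableSet_Ioc
          fun z hz => hz₀ (Icc_subset_uIcc ⟨by linarith [hz.2], by linarith [hz.1]⟩)
    _ ≤ ∫ z in Ioi y, J (x - z) :=
        setIntegral_mono_set hint.integrableOn (ae_of_all _ fun _ => (hJpos _).le)
          Ioc_subset_Ioi_self.eventuallyLE

theorem fluxR_nonneg (hJ₀ : ∀ z, 0 ≤ J z) {u : ℝ → ℝ} {a b : ℝ} (hab : a ≤ b)
    (hu : ∀ x ∈ Icc a b, 0 ≤ u x) : 0 ≤ fluxR J u a b :=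
  intervalIntegral.integral_nonneg hab fun x hx =>
    setIntegral_nonneg measurableSet_Ioi fun _ _ => mul_nonneg (hJ₀ _) (hu x hx)

theorem fluxL_nonneg (hJ₀ : ∀ z, 0 ≤ J z) {u : ℝ → ℝ} {a b : ℝ} (hab : a ≤ b)
    (hu : ∀ x ∈ Icc a b, 0 ≤ u x) : 0 ≤ fluxL J u a b :=
  intervalIntegral.integral_nonneg hab fun x hx =>
    setIntegral_nonneg measurableSet_Iio fun _ _ => mul_nonneg (hJ₀ _) (hu x hx)

theorem mul_setIntegral_le_fluxR (hJc : Continuous J) (hJ₀ : ∀ z, 0 ≤ J z) (hJi : Integrable J)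
    (hJ₁ : ∫ z, J z = 1) {u : ℝ → ℝ} {a b c : ℝ} {S : Set ℝ} (hab : a ≤ b)
    (hu : ContinuousOn u (Icc a b)) (hu₀ : ∀ x ∈ Icc a b, 0 ≤ u x) (hS : MeasurableSet S)
    (hSab : S ⊆ Ioc a b) (hc : ∀ x ∈ S, c ≤ ∫ y in Ioi b, J (x - y)) :
    c * ∫ x in S, u x ≤ fluxR J u a b := by
  set T : ℝ → ℝ := fun x => ∫ y in Ioi b, J (x - y)
  have hT₀ : ∀ x, 0 ≤ T x := fun x => setIntegral_nonneg measurableSet_Ioi fun _ _ => hJ₀ _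
  have hTu : IntegrableOn (fun x => T x * u x) (Ioc a b) := by
    refine ((hu.integrableOn_Icc).mono_set Ioc_subset_Icc_self).bdd_mul (c := 1) ?_
      (ae_of_all _ fun x => ?_)
    · exact (StronglyMeasurable.integral_prod_right' (f := fun p : ℝ × ℝ => J (p.1 - p.2))
        (hJc.comp (continuous_fst.sub continuous_snd)).stronglyMeasurable).aestronglyMeasurable
    · rw [Real.norm_of_nonneg (hT₀ x)]
      exact setIntegral_comp_sub_le_one hJ₀ hJi hJ₁ _ x
  have huS : IntegrableOn u S := (hu.integrableOn_Icc).mono_set (hSab.trans Ioc_subset_Icc_self)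
  calc c * ∫ x in S, u x = ∫ x in S, c * u x := (integral_const_mul c _).symm
    _ ≤ ∫ x in S, T x * u x :=
        setIntegral_mono_on (huS.const_mul c) (hTu.mono_set hSab) hS fun x hx =>
          mul_le_mul_of_nonneg_right (hc x hx) (hu₀ x (Ioc_subset_Icc_self (hSab hx)))
    _ ≤ ∫ x in Ioc a b, T x * u x :=
        setIntegral_mono_set hTu (ae_restrict_of_forall_mem measurableSet_Ioc fun x hx =>
          mul_nonneg (hT₀ x) (hu₀ x (Ioc_subset_Icc_self hx))) hSab.eventuallyLE
    _ = fluxR J u a b := by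
        rw [fluxR, intervalIntegral.integral_of_le hab]
        exact setIntegral_congr_fun measurableSet_Ioc fun x _ => (integral_mul_const _ _).symm

end Kernel

def spaceTimeDomain (g h : ℝ → ℝ) : Set (ℝ × ℝ) :=
  {p | 0 ≤ p.1 ∧ g p.1 ≤ p.2 ∧ p.2 ≤ h p.1}

theorem isCompact_spaceTimeDomain_inter {g h : ℝ → ℝ} (hg : ContinuousOn g (Ici 0))
    (hh : ContinuousOn h (Ici 0)) (T : ℝ) :
    IsCompact (spaceTimeDomain g h ∩ {p | p.1 ≤ T}) := by
  have hIcc : Icc 0 T ⊆ Ici (0 : ℝ) := Icc_subset_Ici_self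
  have hgT : ContinuousOn (fun p : ℝ × ℝ => g p.1) (Icc 0 T ×ˢ univ) :=
    (hg.mono hIcc).comp continuousOn_fst fun p hp => hp.1
  have hhT : ContinuousOn (fun p : ℝ × ℝ => h p.1) (Icc 0 T ×ˢ univ) :=
    (hh.mono hIcc).comp continuousOn_fst fun p hp => hp.1
  have hclosed := ((isClosed_Icc.prod isClosed_univ).isClosed_le hgT continuousOn_snd).isClosed_le
    continuousOn_snd (hhT.mono fun p hp => hp.1)
  obtain ⟨m, hm⟩ := isCompact_Icc.bddBelow_image (hg.mono hIcc)
  obtain ⟨M, hM⟩ := isCompact_Icc.bddAbove_image (hh.mono hIcc)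
  refine ((isCompact_Icc (a := 0) (b := T)).prod (isCompact_Icc (a := m) (b := M)))
    |>.of_isClosed_subset (by convert hclosed using 1; ext p; simp [spaceTimeDomain]; tauto) ?_
  rintro p ⟨⟨hp0, hgp, hph⟩, hpT⟩
  exact ⟨⟨hp0, hpT⟩, (hm ⟨p.1, ⟨hp0, hpT⟩, rfl⟩).trans hgp,
    hph.trans (hM ⟨p.1, ⟨hp0, hpT⟩, rfl⟩)⟩

theorem ContinuousOn.uncurry_left_of_spaceTimeDomain {g h : ℝ → ℝ} {u : ℝ → ℝ → ℝ}
    (hu : ContinuousOn (Function.uncurry u) (spaceTimeDomain g h)) {t : ℝ} (ht : 0 ≤ t) :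
    ContinuousOn (u t) (Icc (g t) (h t)) :=
  hu.comp (continuous_const.prodMk continuous_id).continuousOn fun _ hy => ⟨ht, hy⟩

theorem ContinuousOn.uncurry_right_of_spaceTimeDomain {g h : ℝ → ℝ} {u : ℝ → ℝ → ℝ}
    (hu : ContinuousOn (Function.uncurry u) (spaceTimeDomain g h)) {x : ℝ}
    (hx : ∀ t ≥ 0, x ∈ Icc (g t) (h t)) : ContinuousOn (fun t => u t x) (Ici 0) :=
  hu.comp (continuous_id.prodMk continuous_const).continuousOn fun t ht => ⟨ht, hx t ht⟩

-- Per-capita growth rate of `u` in the presence of `v`: `e = -c` when `v` competes with or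
-- preys on `u`, `e = c` for the predator `u2` of (1.5).
def lvRate (a b e : ℝ) (u v : ℝ → ℝ → ℝ) : ℝ → ℝ → ℝ :=
  fun t x => a - b * u t x + e * v t x

def SolvesNonlocalEq (d : ℝ) (J : ℝ → ℝ) (P u : ℝ → ℝ → ℝ) (g h : ℝ → ℝ) : Prop :=
  ∀ t > 0, ∀ x ∈ Ioo (g t) (h t), HasDerivAt (fun τ => u τ x)
    (d * ((∫ y in g t..h t, J (x - y) * u t y) - u t x) + u t x * P t x) t

namespace SolvesNonlocalEq

variable {d : ℝ} {J : ℝ → ℝ} {P u : ℝ → ℝ → ℝ} {g h : ℝ → ℝ}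

theorem false_of_isMinOn_neg (hsol : SolvesNonlocalEq d J P u g h) (hd : 0 ≤ d)
    (hJc : Continuous J) (hJ₀ : ∀ z, 0 ≤ J z) (hJi : Integrable J) (hJ₁ : ∫ z, J z = 1)
    {r t₀ x₀ : ℝ} (ht₀ : 0 < t₀) (hx₀ : x₀ ∈ Ioo (g t₀) (h t₀)) (hu₀ : u t₀ x₀ < 0)
    (hP : P t₀ x₀ < r) (hslice : ContinuousOn (u t₀) (Icc (g t₀) (h t₀)))
    (hspace : ∀ y ∈ Icc (g t₀) (h t₀), u t₀ x₀ ≤ u t₀ y)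
    (htime : IsMinOn (fun τ => Real.exp (-(r * τ)) * u τ x₀) (Icc 0 t₀) t₀) : False := by
  have hweight : HasDerivAt (fun τ => Real.exp (-(r * τ))) (Real.exp (-(r * t₀)) * -r) t₀ :=
    ((hasDerivAt_id t₀).const_mul r).neg.exp.congr_deriv (by simp)
  have hdecay := ((hweight.mul (hsol t₀ ht₀ x₀ hx₀)).nonpos_of_isMinOn_Icc ht₀ htime)
  have hI := le_intervalIntegral_comp_sub_mul hJc hJ₀ hJi hJ₁ (x := x₀)
    (hx₀.1.trans hx₀.2).le hslice hu₀.le hspace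
  nlinarith [Real.exp_pos (-(r * t₀)), mul_pos_of_neg_of_neg hu₀ (sub_neg.2 hP),
    mul_nonneg hd (sub_nonneg.2 hI)]

theorem nonneg (hsol : SolvesNonlocalEq d J P u g h) (hd : 0 ≤ d) (hJc : Continuous J)
    (hJ₀ : ∀ z, 0 ≤ J z) (hJi : Integrable J) (hJ₁ : ∫ z, J z = 1)
    (hg : ContinuousOn g (Ici 0)) (hh : ContinuousOn h (Ici 0))
    (hu : ContinuousOn (Function.uncurry u) (spaceTimeDomain g h))
    (hP : ContinuousOn (Function.uncurry P) (spaceTimeDomain g h))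
    (hinit : ∀ x ∈ Icc (g 0) (h 0), 0 ≤ u 0 x) (hbdry : ∀ t ≥ 0, u t (g t) = 0 ∧ u t (h t) = 0)
    (hext : ∀ t x, 0 ≤ t → x ∉ Icc (g t) (h t) → u t x = 0) {t : ℝ} (ht : 0 ≤ t) (x : ℝ) :
    0 ≤ u t x := by
  by_cases hx : x ∉ Icc (g t) (h t)
  · exact (hext t x ht hx).ge
  set K := spaceTimeDomain g h ∩ {p | p.1 ≤ t}
  have hK := isCompact_spaceTimeDomain_inter hg hh t
  obtain ⟨Λ, hΛ⟩ := hK.bddAbove_image (hP.mono inter_subset_left)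
  -- `u` weighted by `exp (-(Λ + 1) t)` cannot attain a negative minimum on `K`
  set w : ℝ × ℝ → ℝ := fun p => Real.exp (-((Λ + 1) * p.1)) * u p.1 p.2
  have hw : ContinuousOn w K :=
    (continuous_const.mul continuous_fst).neg.rexp.continuousOn.mul (hu.mono inter_subset_left)
  have htx : (t, x) ∈ K := ⟨⟨ht, not_not.1 hx⟩, le_refl t⟩
  obtain ⟨⟨t₀, x₀⟩, hp₀, hmin⟩ := hK.exists_isMinOn ⟨_, htx⟩ hw
  obtain ⟨⟨ht₀, hgx₀, hx₀h⟩, ht₀t⟩ : (0 ≤ t₀ ∧ g t₀ ≤ x₀ ∧ x₀ ≤ h t₀) ∧ t₀ ≤ t := hp₀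
  suffices 0 ≤ w (t₀, x₀) from
    (mul_nonneg_iff_of_pos_left (Real.exp_pos _)).1 (this.trans (hmin htx))
  by_contra hneg
  have hu₀ : u t₀ x₀ < 0 := neg_of_mul_neg_right (not_le.1 hneg) (Real.exp_pos _).le
  have hmem : ∀ τ y, 0 ≤ τ → τ ≤ t → g τ ≤ y → y ≤ h τ → w (t₀, x₀) ≤ w (τ, y) :=
    fun τ y hτ hτt hgy hyh => hmin ⟨⟨hτ, hgy, hyh⟩, hτt⟩
  have ht₀pos : 0 < t₀ := by
    refine ht₀.lt_of_ne fun h0 => ?_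
    subst h0
    exact hu₀.not_ge (hinit x₀ ⟨hgx₀, hx₀h⟩)
  have hx₀ : x₀ ∈ Ioo (g t₀) (h t₀) := by
    refine ⟨hgx₀.lt_of_ne fun heq => ?_, hx₀h.lt_of_ne fun heq => ?_⟩
    · exact hu₀.ne (heq ▸ (hbdry t₀ ht₀).1)
    · exact hu₀.ne (heq ▸ (hbdry t₀ ht₀).2)
  refine hsol.false_of_isMinOn_neg hd hJc hJ₀ hJi hJ₁ ht₀pos hx₀ hu₀
    ((hΛ ⟨(t₀, x₀), ⟨⟨ht₀, hgx₀, hx₀h⟩, ht₀t⟩, rfl⟩).trans_lt (lt_add_one Λ))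
    (hu.uncurry_left_of_spaceTimeDomain ht₀)
    (fun y hy => ?_) (fun τ hτ => ?_)
  · exact le_of_mul_le_mul_left (hmem t₀ y ht₀ ht₀t hy.1 hy.2) (Real.exp_pos _)
  · by_cases hτx₀ : x₀ ∈ Icc (g τ) (h τ)
    · exact hmem τ x₀ hτ.1 (hτ.2.trans ht₀t) hτx₀.1 hτx₀.2
    · show w (t₀, x₀) ≤ w (τ, x₀)
      simp only [w, hext τ x₀ hτ.1 hτx₀, mul_zero]
      exact (not_le.1 hneg).le

theorem not_integrableOn_Ioi {a b c e x₀ : ℝ} {v : ℝ → ℝ → ℝ}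
    (hsol : SolvesNonlocalEq d J (lvRate a b e u v) u g h) (hd : 0 ≤ d) (hda : d ≤ a)
    (hb : 0 ≤ b) (hc : 0 ≤ c) (hec : -c ≤ e) (hJ₀ : ∀ z, 0 ≤ J z)
    (hx₀ : ∀ t > 0, x₀ ∈ Ioo (g t) (h t)) (hu₀ : ∀ t ≥ 0, ∀ x, 0 ≤ u t x)
    (hv₀ : ∀ t ≥ 0, ∀ x, 0 ≤ v t x) (huc : ContinuousOn (fun t => u t x₀) (Ici 0))
    (hvc : ContinuousOn (fun t => v t x₀) (Ici 0)) (hpos : 0 < u 0 x₀)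
    (hvi : IntegrableOn (fun t => v t x₀) (Ioi 0)) : ¬IntegrableOn (fun t => u t x₀) (Ioi 0) := by
  intro hui
  -- `a ≥ d` absorbs the dispersal loss, leaving `u' ≥ -(b u + c v) u`
  refine not_integrableOn_Ioi_of_hasDerivAt_ge (β := fun t => b * u t x₀ + c * v t x₀) huc
    ((huc.const_smul b).add (hvc.const_smul c))
    (fun t ht => by positivity [hu₀ t ht.le x₀, hv₀ t ht.le x₀])
    ((hui.const_mul b).add (hvi.const_mul c)) (fun t ht => hsol t ht x₀ (hx₀ t ht))
    (fun t ht => ?_) hpos hui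
  have hI : 0 ≤ ∫ y in g t..h t, J (x₀ - y) * u t y :=
    intervalIntegral.integral_nonneg ((hx₀ t ht).1.trans (hx₀ t ht).2).le
      fun y _ => mul_nonneg (hJ₀ _) (hu₀ t ht.le y)
  have hu := hu₀ t ht.le x₀
  have hv := hv₀ t ht.le x₀
  simp only [lvRate]
  nlinarith [mul_nonneg (sub_nonneg.2 hda) hu, mul_nonneg hd hI,
    mul_nonneg (mul_nonneg (neg_le_iff_add_nonneg.1 hec) hu) hv]

end SolvesNonlocalEq

theorem continuousOn_lvRate {a b e : ℝ} {u v : ℝ → ℝ → ℝ} {s : Set (ℝ × ℝ)}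
    (hu : ContinuousOn (Function.uncurry u) s) (hv : ContinuousOn (Function.uncurry v) s) :
    ContinuousOn (Function.uncurry (lvRate a b e u v)) s :=
  (continuousOn_const.sub (continuousOn_const.mul hu)).add (continuousOn_const.mul hv)

theorem InitCond.nonneg {h0 : ℝ} {u0 : ℝ → ℝ} (hu0 : InitCond h0 u0) :
    ∀ x ∈ Icc (-h0) h0, 0 ≤ u0 x := by
  obtain ⟨-, hleft, hright, hpos⟩ := hu0
  rintro x ⟨hx₁, hx₂⟩
  rcases hx₁.eq_or_lt with rfl | hx₁
  · exact hleft.ge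
  rcases hx₂.eq_or_lt with rfl | hx₂
  · exact hright.ge
  exact (hpos x ⟨hx₁, hx₂⟩).le

theorem integrableOn_Ioi_mass_of_front_bounded {J : ℝ → ℝ} {u : ℝ → ℝ → ℝ} {g h H' : ℝ → ℝ}
    {μ h0 R : ℝ} (hh0 : 0 ≤ h0) (hJ : KernelJ J) (hJpos : ∀ z, 0 < J z) (hμ : 0 < μ)
    (hu : ContinuousOn (Function.uncurry u) (spaceTimeDomain g h))
    (hnn : ∀ t ≥ 0, ∀ x, 0 ≤ u t x) (hdom : ∀ t ≥ 0, g t ≤ -h0 ∧ h0 ≤ h t)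
    (hR : ∀ t ≥ 0, h t ≤ R) (hh : ∀ t ≥ 0, HasDerivWithinAt h (H' t) (Ici 0) t)
    (hflux : ∀ t > 0, μ * fluxR J (u t) (g t) (h t) ≤ H' t) :
    IntegrableOn (fun t => ∫ x in Ioo (-h0) h0, u t x) (Ioi 0) := by
  obtain ⟨hJc, hJ₀, -, -, hJi, hJ₁, -⟩ := hJ
  obtain ⟨c, hc, hcJ⟩ := exists_pos_le_integral_Ioi_comp_sub hJc hJpos hJi R
  have hsub : ∀ t ≥ 0, Icc (-h0) h0 ⊆ Icc (g t) (h t) := fun t ht =>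
    Icc_subset_Icc (hdom t ht).1 (hdom t ht).2
  have hmass := integrableOn_Ioi_of_le_hasDerivWithinAt
    (E := fun t => μ * c * ∫ x in Ioo (-h0) h0, u t x) hh hR
    (fun t ht => by
      have : 0 ≤ ∫ x in Ioo (-h0) h0, u t x :=
        setIntegral_nonneg measurableSet_Ioo fun x _ => hnn t ht x
      positivity)
    (fun T => ?_) (fun t ht => ?_)
  · exact (integrable_const_mul_iff (IsUnit.mk0 _ (by positivity)) _).1 hmass
  · have hU : IntegrableOn (Function.uncurry u) (Icc 0 T ×ˢ Ioo (-h0) h0) :=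
      ((hu.mono fun p hp => ⟨hp.1.1, hsub p.1 hp.1.1 hp.2⟩).integrableOn_compact
        (isCompact_Icc.prod isCompact_Icc)).mono_set (prod_mono subset_rfl Ioo_subset_Icc_self)
    rw [IntegrableOn, Measure.volume_eq_prod, ← Measure.prod_restrict] at hU
    exact hU.integral_prod_left.const_mul _
  · obtain ⟨hgt, hht⟩ := hdom t ht.le
    have hcore : Ioo (-h0) h0 ⊆ Ioc (g t) (h t) := fun x hx =>
      ⟨hgt.trans_lt hx.1, hx.2.le.trans hht⟩
    have hfluxR := mul_setIntegral_le_fluxR hJc hJ₀ hJi hJ₁ (by linarith)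
      (hu.uncurry_left_of_spaceTimeDomain ht.le) (fun x _ => hnn t ht.le x) measurableSet_Ioo
      hcore fun x hx => hcJ x (h t) (by linarith [hx.1, hR t ht.le]) (hcore hx).2 (hR t ht.le)
    calc μ * c * ∫ x in Ioo (-h0) h0, u t x = μ * (c * ∫ x in Ioo (-h0) h0, u t x) :=
          mul_assoc _ _ _
      _ ≤ μ * fluxR J (u t) (g t) (h t) := by gcongr
      _ ≤ H' t := hflux t ht

namespace IsSolution

variable {d1 d2 μ1 μ2 h0 : ℝ} {J1 J2 : ℝ → ℝ} {f1 f2 : ℝ → ℝ → ℝ → ℝ → ℝ} {u10 u20 : ℝ → ℝ}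
  {u1 u2 : ℝ → ℝ → ℝ} {g h : ℝ → ℝ}

theorem continuousOn_g (hsol : IsSolution d1 d2 μ1 μ2 h0 J1 J2 f1 f2 u10 u20 u1 u2 g h) :
    ContinuousOn g (Ici 0) :=
  fun t ht => (hsol.fbg t ht).continuousWithinAt

theorem continuousOn_h (hsol : IsSolution d1 d2 μ1 μ2 h0 J1 J2 f1 f2 u10 u20 u1 u2 g h) :
    ContinuousOn h (Ici 0) :=
  fun t ht => (hsol.fbh t ht).continuousWithinAt

theorem solvesNonlocalEq_fst {a1 b1 c1 : ℝ}
    (hsol : IsSolution d1 d2 μ1 μ2 h0 J1 J2 (lvF1 a1 b1 c1) f2 u10 u20 u1 u2 g h) :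
    SolvesNonlocalEq d1 J1 (lvRate a1 b1 (-c1) u1 u2) u1 g h :=
  fun t ht x hx => (hsol.pde1 t x ht hx).congr_deriv (by simp only [lvF1, lvRate]; ring)

theorem solvesNonlocalEq_snd {a2 b2 c2 : ℝ}
    (hsol : IsSolution d1 d2 μ1 μ2 h0 J1 J2 f1 f2 u10 u20 u1 u2 g h)
    (hmodel : f2 = compF2 a2 b2 c2 ∨ f2 = predF2 a2 b2 c2) :
    ∃ e, (e = -c2 ∨ e = c2) ∧ SolvesNonlocalEq d2 J2 (lvRate a2 b2 e u2 u1) u2 g h := by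
  rcases hmodel with rfl | rfl
  · exact ⟨-c2, .inl rfl, fun t ht x hx => (hsol.pde2 t x ht hx).congr_deriv
      (by simp only [compF2, lvRate]; ring)⟩
  · exact ⟨c2, .inr rfl, fun t ht x hx => (hsol.pde2 t x ht hx).congr_deriv
      (by simp only [predF2, lvRate]; ring)⟩

theorem nonneg {a1 b1 c1 a2 b2 c2 : ℝ}
    (hsol : IsSolution d1 d2 μ1 μ2 h0 J1 J2 (lvF1 a1 b1 c1) f2 u10 u20 u1 u2 g h)
    (hd1 : 0 ≤ d1) (hd2 : 0 ≤ d2) (hJ1 : KernelJ J1) (hJ2 : KernelJ J2)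
    (hu10 : InitCond h0 u10) (hu20 : InitCond h0 u20)
    (hmodel : f2 = compF2 a2 b2 c2 ∨ f2 = predF2 a2 b2 c2) :
    (∀ t ≥ 0, ∀ x, 0 ≤ u1 t x) ∧ (∀ t ≥ 0, ∀ x, 0 ≤ u2 t x) := by
  obtain ⟨hJ1c, hJ1₀, -, -, hJ1i, hJ1₁, -⟩ := hJ1
  obtain ⟨hJ2c, hJ2₀, -, -, hJ2i, hJ2₁, -⟩ := hJ2
  obtain ⟨e, -, hsol2⟩ := hsol.solvesNonlocalEq_snd hmodel
  have hdom0 : Icc (g 0) (h 0) = Icc (-h0) h0 := by rw [hsol.g_zero, hsol.h_zero]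
  constructor
  · exact fun t ht => hsol.solvesNonlocalEq_fst.nonneg hd1 hJ1c hJ1₀ hJ1i hJ1₁
      hsol.continuousOn_g hsol.continuousOn_h hsol.cont1 (continuousOn_lvRate hsol.cont1 hsol.cont2)
      (fun x hx => (hsol.init1 x (hdom0 ▸ hx)).symm ▸ hu10.nonneg x (hdom0 ▸ hx))
      hsol.bdry1 hsol.ext1 ht
  · exact fun t ht => hsol2.nonneg hd2 hJ2c hJ2₀ hJ2i hJ2₁ hsol.continuousOn_g
      hsol.continuousOn_h hsol.cont2 (continuousOn_lvRate hsol.cont2 hsol.cont1)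
      (fun x hx => (hsol.init2 x (hdom0 ▸ hx)).symm ▸ hu20.nonneg x (hdom0 ▸ hx))
      hsol.bdry2 hsol.ext2 ht

theorem monotoneOn_h_and_antitoneOn_g
    (hsol : IsSolution d1 d2 μ1 μ2 h0 J1 J2 f1 f2 u10 u20 u1 u2 g h) (hh0 : 0 < h0)
    (hμ1 : 0 ≤ μ1) (hμ2 : 0 ≤ μ2) (hJ1₀ : ∀ z, 0 ≤ J1 z) (hJ2₀ : ∀ z, 0 ≤ J2 z)
    (hnn1 : ∀ t ≥ 0, ∀ x, 0 ≤ u1 t x) (hnn2 : ∀ t ≥ 0, ∀ x, 0 ≤ u2 t x) :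
    MonotoneOn h (Ici 0) ∧ AntitoneOn g (Ici 0) := by
  have hR : ∀ t ≥ 0, g t ≤ h t →
      0 ≤ μ1 * fluxR J1 (u1 t) (g t) (h t) + μ2 * fluxR J2 (u2 t) (g t) (h t) :=
    fun t ht hgh => add_nonneg (mul_nonneg hμ1 (fluxR_nonneg hJ1₀ hgh fun x _ => hnn1 t ht x))
      (mul_nonneg hμ2 (fluxR_nonneg hJ2₀ hgh fun x _ => hnn2 t ht x))
  have hL : ∀ t ≥ 0, g t ≤ h t →
      0 ≤ μ1 * fluxL J1 (u1 t) (g t) (h t) + μ2 * fluxL J2 (u2 t) (g t) (h t) :=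
    fun t ht hgh => add_nonneg (mul_nonneg hμ1 (fluxL_nonneg hJ1₀ hgh fun x _ => hnn1 t ht x))
      (mul_nonneg hμ2 (fluxL_nonneg hJ2₀ hgh fun x _ => hnn2 t ht x))
  -- the fluxes are nonnegative as long as the domain is, so the width never reaches zero
  have hgh : ∀ t ≥ 0, g t ≤ h t := fun t ht =>
    (sub_pos.1 <| pos_of_hasDerivWithinAt_nonneg_of_pos
      (fun t ht => (hsol.fbh t ht).sub (hsol.fbg t ht))
      (show 0 < h 0 - g 0 by rw [hsol.g_zero, hsol.h_zero]; linarith)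
      (fun t ht hpos => by linarith [hR t ht (sub_pos.1 hpos).le, hL t ht (sub_pos.1 hpos).le])
      ht).le
  refine ⟨monotoneOn_of_hasDerivWithinAt_nonneg (convex_Ici 0) hsol.continuousOn_h
      (fun t ht => (hsol.fbh t (interior_subset ht)).mono interior_subset)
      (fun t ht => hR t (interior_subset ht) (hgh t (interior_subset ht))),
    antitoneOn_of_hasDerivWithinAt_nonpos (convex_Ici 0) hsol.continuousOn_g
      (fun t ht => (hsol.fbg t (interior_subset ht)).mono interior_subset)
      (fun t ht => neg_nonpos.2 (hL t (interior_subset ht) (hgh t (interior_subset ht))))⟩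

theorem exists_integrableOn_Ioi
    (hsol : IsSolution d1 d2 μ1 μ2 h0 J1 J2 f1 f2 u10 u20 u1 u2 g h) (hh0 : 0 < h0)
    (hμ1 : 0 < μ1) (hμ2 : 0 < μ2) (hJ1 : KernelJ J1) (hJ2 : KernelJ J2)
    (hJ1pos : ∀ z, 0 < J1 z) (hJ2pos : ∀ z, 0 < J2 z)
    (hnn1 : ∀ t ≥ 0, ∀ x, 0 ≤ u1 t x) (hnn2 : ∀ t ≥ 0, ∀ x, 0 ≤ u2 t x)
    (hdom : ∀ t ≥ 0, g t ≤ -h0 ∧ h0 ≤ h t) {R : ℝ} (hR : ∀ t ≥ 0, h t ≤ R) :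
    ∃ x₀ ∈ Ioo (-h0) h0,
      IntegrableOn (fun t => u1 t x₀) (Ioi 0) ∧ IntegrableOn (fun t => u2 t x₀) (Ioi 0) := by
  have hgh : ∀ t ≥ 0, g t ≤ h t := fun t ht => by linarith [hdom t ht]
  have hmass1 := integrableOn_Ioi_mass_of_front_bounded hh0.le hJ1 hJ1pos hμ1 hsol.cont1 hnn1
    hdom hR hsol.fbh fun t ht => le_add_of_nonneg_right <| mul_nonneg hμ2.le <|
      fluxR_nonneg hJ2.2.1 (hgh t ht.le) fun x _ => hnn2 t ht.le x
  have hmass2 := integrableOn_Ioi_mass_of_front_bounded hh0.le hJ2 hJ2pos hμ2 hsol.cont2 hnn2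
    hdom hR hsol.fbh fun t ht => le_add_of_nonneg_left <| mul_nonneg hμ1.le <|
      fluxR_nonneg hJ1.2.1 (hgh t ht.le) fun x _ => hnn1 t ht.le x
  have hsub : Ioi 0 ×ˢ Ioo (-h0) h0 ⊆ spaceTimeDomain g h := fun p hp =>
    ⟨hp.1.le, (hdom p.1 hp.1.le).1.trans hp.2.1.le, hp.2.2.le.trans (hdom p.1 hp.1.le).2⟩
  have hslices : ∀ {u : ℝ → ℝ → ℝ}, ContinuousOn (Function.uncurry u) (spaceTimeDomain g h) →
      (∀ t ≥ 0, ∀ x, 0 ≤ u t x) → IntegrableOn (fun t => ∫ x in Ioo (-h0) h0, u t x) (Ioi 0) →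
      ∀ᵐ x ∂volume.restrict (Ioo (-h0) h0), IntegrableOn (fun t => u t x) (Ioi 0) :=
    fun hu hnn hmass => ae_integrableOn_of_integrableOn_setIntegral measurableSet_Ioi
      measurableSet_Ioo (hu.mono hsub) (fun p hp => hnn p.1 hp.1.le p.2)
      (fun t ht => (hu.uncurry_left_of_spaceTimeDomain ht.le).integrableOn_Icc.mono_set
        fun x hx => (hsub (show (t, x) ∈ Ioi 0 ×ˢ Ioo (-h0) h0 from ⟨ht, hx⟩)).2)
      hmass
  have : (ae (volume.restrict (Ioo (-h0) h0))).NeBot := by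
    rw [ae_restrict_neBot, Real.volume_Ioo]
    simpa using hh0
  obtain ⟨x₀, hx₀1, hx₀2, hx₀⟩ := ((hslices hsol.cont1 hnn1 hmass1).and
    ((hslices hsol.cont2 hnn2 hmass2).and (ae_restrict_mem measurableSet_Ioo))).exists
  exact ⟨x₀, hx₀, hx₀1, hx₀2⟩

end IsSolution

theorem spreading_when_growth_dominates_dispersal_general
    (d1 d2 μ1 μ2 h0 a1 b1 c1 a2 b2 c2 : ℝ) (J1 J2 : ℝ → ℝ)
    (u10 u20 : ℝ → ℝ) (u1 u2 : ℝ → ℝ → ℝ) (g h : ℝ → ℝ)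
    (F2 : ℝ → ℝ → ℝ → ℝ → ℝ)
    (hd1 : 0 < d1) (hd2 : 0 < d2) (hμ1 : 0 < μ1) (hμ2 : 0 < μ2) (hh0 : 0 < h0)
    (hb1 : 0 < b1) (hc1 : 0 < c1)
    (hb2 : 0 < b2) (hc2 : 0 < c2)
    (hJ1 : KernelJ J1) (hJ2 : KernelJ J2)
    (hJ1pos : ∀ x, 0 < J1 x) (hJ2pos : ∀ x, 0 < J2 x)
    (hu10 : InitCond h0 u10) (hu20 : InitCond h0 u20)
    (hmodel : F2 = compF2 a2 b2 c2 ∨ F2 = predF2 a2 b2 c2)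
    (hsol : IsSolution d1 d2 μ1 μ2 h0 J1 J2 (lvF1 a1 b1 c1) F2 u10 u20 u1 u2 g h)
    (had : d1 ≤ a1 ∨ d2 ≤ a2) :
    Tendsto (fun t => h t - g t) atTop atTop := by
  obtain ⟨hnn1, hnn2⟩ := hsol.nonneg hd1.le hd2.le hJ1 hJ2 hu10 hu20 hmodel
  obtain ⟨hh_mono, hg_anti⟩ :=
    hsol.monotoneOn_h_and_antitoneOn_g hh0 hμ1.le hμ2.le hJ1.2.1 hJ2.2.1 hnn1 hnn2
  have hdom : ∀ t ≥ 0, g t ≤ -h0 ∧ h0 ≤ h t := fun t ht =>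
    ⟨hsol.g_zero ▸ hg_anti self_mem_Ici ht ht, hsol.h_zero ▸ hh_mono self_mem_Ici ht ht⟩
  by_contra hbounded
  obtain ⟨M, hM⟩ := MonotoneOn.exists_forall_le_of_not_tendsto_atTop
    (fun s hs t ht hst => by linarith [hh_mono hs ht hst, hg_anti hs ht hst]) hbounded
  obtain ⟨x₀, hx₀, hint1, hint2⟩ := hsol.exists_integrableOn_Ioi hh0 hμ1 hμ2 hJ1 hJ2 hJ1pos hJ2pos
    hnn1 hnn2 hdom (R := M - h0) fun t ht => by linarith [hM t ht, hdom t ht]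
  have hx₀t : ∀ t ≥ 0, x₀ ∈ Ioo (g t) (h t) := fun t ht =>
    ⟨(hdom t ht).1.trans_lt hx₀.1, hx₀.2.trans_le (hdom t ht).2⟩
  have hx₀I : ∀ t ≥ 0, x₀ ∈ Icc (g t) (h t) := fun t ht => Ioo_subset_Icc_self (hx₀t t ht)
  have hu1c := hsol.cont1.uncurry_right_of_spaceTimeDomain hx₀I
  have hu2c := hsol.cont2.uncurry_right_of_spaceTimeDomain hx₀I
  rcases had with had | had
  · exact hsol.solvesNonlocalEq_fst.not_integrableOn_Ioi hd1.le had hb1.le hc1.le le_rfl hJ1.2.1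
      (fun t ht => hx₀t t ht.le) hnn1 hnn2 hu1c hu2c
      (hsol.init1 x₀ (Ioo_subset_Icc_self hx₀) ▸ hu10.2.2.2 x₀ hx₀) hint2 hint1
  · obtain ⟨e, he, hsol2⟩ := hsol.solvesNonlocalEq_snd hmodel
    exact hsol2.not_integrableOn_Ioi hd2.le had hb2.le hc2.le
      (by rcases he with rfl | rfl <;> linarith) hJ2.2.1 (fun t ht => hx₀t t ht.le) hnn2 hnn1
      hu2c hu1c (hsol.init2 x₀ (Ioo_subset_Icc_self hx₀) ▸ hu20.2.2.2 x₀ hx₀) hint1 hint2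

/-- Corollary 3.4: if a1 ≥ d1 or a2 ≥ d2 then spreading happens. -/
theorem spreading_when_growth_dominates_dispersal
    (d1 d2 μ1 μ2 h0 a1 b1 c1 a2 b2 c2 : ℝ) (J1 J2 : ℝ → ℝ)
    (u10 u20 : ℝ → ℝ) (u1 u2 : ℝ → ℝ → ℝ) (g h : ℝ → ℝ)
    (F2 : ℝ → ℝ → ℝ → ℝ → ℝ)
    (hd1 : 0 < d1) (hd2 : 0 < d2) (hμ1 : 0 < μ1) (hμ2 : 0 < μ2) (hh0 : 0 < h0)
    (ha1 : 0 < a1) (hb1 : 0 < b1) (hc1 : 0 < c1)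
    (ha2 : 0 < a2) (hb2 : 0 < b2) (hc2 : 0 < c2)
    (hJ1 : KernelJ J1) (hJ2 : KernelJ J2)
    (hJ1pos : ∀ x, 0 < J1 x) (hJ2pos : ∀ x, 0 < J2 x)
    (hu10 : InitCond h0 u10) (hu20 : InitCond h0 u20)
    (hmodel : F2 = compF2 a2 b2 c2 ∨ F2 = predF2 a2 b2 c2)
    (hsol : IsSolution d1 d2 μ1 μ2 h0 J1 J2 (lvF1 a1 b1 c1) F2 u10 u20 u1 u2 g h)
    (had : d1 ≤ a1 ∨ d2 ≤ a2) :
    Tendsto (fun t => h t - g t) atTop atTop :=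
  spreading_when_growth_dominates_dispersal_general d1 d2 μ1 μ2 h0 a1 b1 c1 a2 b2 c2 J1 J2 u10 u20
    u1 u2 g h F2 hd1 hd2 hμ1 hμ2 hh0 hb1 hc1 hb2 hc2 hJ1 hJ2 hJ1pos hJ2pos hu10 hu20 hmodel hsol had
end
end

section
/- Let J1, J2 satisfy condition (J) and let β1, β2 > 0 be constants. Suppose g, h ∈ C¹([0,∞)) with g(0) < h(0), g'(t) ≤ 0 and h'(t) ≥ 0 for all t, and suppose w1, w2 and their time derivatives ∂t w1, ∂t w2 are continuous and bounded on D := {(t,x): t > 0, g(t) < x < h(t)}. If for all t ≥ 0: h'(t) = Σ_{i=1}^{2} β_i ∫_{g(t)}^{h(t)} ∫_{h(t)}^{∞} J_i(x−y) wi(t,x) dy dx and g'(t) = −Σ_{i=1}^{2} β_i ∫_{g(t)}^{h(t)} ∫_{−∞}^{g(t)} J_i(x−y) wi(t,x) dy dx, and if lim_{t→∞} h(t) − lim_{t→∞} g(t) < ∞, then lim_{t→∞} g'(t) = lim_{t→∞} h'(t) = 0. -/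
/-!
Through the substitution `z = x - y`, the flux through the right end is `∫_g^h F (x - h) w x dx`,
where `F` is the distribution function of the kernel, which takes values in `[0, 1]` and is
Lipschitz because the kernel is bounded (the left end is symmetric, by evenness). Since `w` is
bounded and Lipschitz in time and the ends move monotonically, each speed `p` satisfies
`p t ≤ p s + C ((s - t) + (ω s - ω t))` for `t ≤ s`, with `ω = h - g` the length of the domain.
As `ω` converges, a speed that stays above `ε` at some late time `t` stays above `ε / 2` on
`[t, t + δ]`, so the boundary moves by at least `ε δ / 2` there, contradicting its convergence.
-/

open MeasureTheory Filter

noncomputable section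

open Set
open scoped NNReal Topology

def kernelCdf (J : ℝ → ℝ) (a : ℝ) : ℝ :=
  ∫ z in Iic a, J z

theorem setIntegral_comp_sub_left (f : ℝ → ℝ) (x : ℝ) (s : Set ℝ) :
    ∫ y in (x - ·) ⁻¹' s, f (x - y) = ∫ z in s, f z :=
  (Measure.measurePreserving_sub_left volume x).setIntegral_preimage_emb
    (MeasurableEquiv.subLeft x).measurableEmbedding f s

section Kernel

variable {J : ℝ → ℝ}

theorem integral_Ioi_comp_sub (x b : ℝ) :
    ∫ y in Ioi b, J (x - y) = kernelCdf J (x - b) := by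
  have hpre : (x - ·) ⁻¹' Iio (x - b) = Ioi b := by ext; simp
  rw [kernelCdf, integral_Iic_eq_integral_Iio, ← setIntegral_comp_sub_left J x, hpre]

theorem integral_Iio_comp_sub (hJ : ∀ z, J (-z) = J z) (x a : ℝ) :
    ∫ y in Iio a, J (x - y) = kernelCdf J (a - x) := by
  have hpre : (x - ·) ⁻¹' Ioi (x - a) = Iio a := by ext; simp
  rw [← hpre, setIntegral_comp_sub_left, kernelCdf, ← neg_sub, ← integral_comp_neg_Iic]
  simp only [hJ]

theorem fluxR_eq (u : ℝ → ℝ) (a b : ℝ) :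
    fluxR J u a b = ∫ x in a..b, kernelCdf J (x - b) * u x := by
  simp only [fluxR, integral_mul_const, integral_Ioi_comp_sub]

theorem fluxL_eq (hJ : ∀ z, J (-z) = J z) (u : ℝ → ℝ) (a b : ℝ) :
    fluxL J u a b = ∫ x in a..b, kernelCdf J (-(x - a)) * u x := by
  simp only [fluxL, integral_mul_const, integral_Iio_comp_sub hJ, neg_sub]

theorem abs_kernelCdf_le_one (hJ : ∀ z, 0 ≤ J z) (hint : Integrable J) (hone : ∫ z, J z = 1)
    (a : ℝ) : |kernelCdf J a| ≤ 1 := by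
  rw [kernelCdf, abs_of_nonneg (setIntegral_nonneg measurableSet_Iic fun z _ => hJ z), ← hone]
  exact setIntegral_le_integral hint (Eventually.of_forall hJ)

theorem lipschitzWith_kernelCdf (hint : Integrable J) {C : ℝ≥0} (hC : ∀ z, ‖J z‖ ≤ C) :
    LipschitzWith C (kernelCdf J) := by
  refine LipschitzWith.of_dist_le_mul fun a b => ?_
  rw [dist_comm, dist_comm a, dist_eq_norm, dist_eq_norm, kernelCdf, kernelCdf,
    intervalIntegral.integral_Iic_sub_Iic hint.integrableOn hint.integrableOn,
    Real.norm_eq_abs (b - a)]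
  exact intervalIntegral.norm_integral_le_of_norm_le_const fun z _ => hC z

end Kernel

section IntervalEstimates

variable {f f₁ f₂ : ℝ → ℝ} {a a' b b' C : ℝ}

theorem abs_intervalIntegral_le_of_forall_mem_Ioo (hab : a ≤ b)
    (h : ∀ x ∈ Ioo a b, |f x| ≤ C) : |∫ x in a..b, f x| ≤ C * (b - a) := by
  have hae : ∀ᵐ x, x ∈ uIoc a b → ‖f x‖ ≤ C := by
    filter_upwards [(Ioo_ae_eq_Ioc (μ := volume) (a := a) (b := b)).mem_iff] with x hx hxab
    exact h x (hx.2 (uIoc_of_le hab ▸ hxab))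
  simpa [abs_of_nonneg (sub_nonneg.2 hab)] using
    intervalIntegral.norm_integral_le_of_norm_le_const_ae hae

theorem intervalIntegrable_of_continuousOn_Ioo (hab : a ≤ b) (hf : ContinuousOn f (Ioo a b))
    (h : ∀ x ∈ Ioo a b, |f x| ≤ C) : IntervalIntegrable f volume a b := by
  rw [intervalIntegrable_iff_integrableOn_Ioo_of_le hab]
  exact ⟨hf.aestronglyMeasurable measurableSet_Ioo, .restrict_of_bounded (C := C)
    measure_Ioo_lt_top ((ae_restrict_mem measurableSet_Ioo).mono h)⟩

theorem abs_intervalIntegral_sub_le_of_subinterval (ha : a' ≤ a) (hab : a ≤ b) (hb : b ≤ b')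
    (hf₁ : IntervalIntegrable f₁ volume a' b') (hf₂ : IntervalIntegrable f₂ volume a b)
    {M δ : ℝ} (hM : ∀ x ∈ Ioo a' b', |f₁ x| ≤ M) (hδ : ∀ x ∈ Ioo a b, |f₁ x - f₂ x| ≤ δ) :
    |(∫ x in a'..b', f₁ x) - ∫ x in a..b, f₂ x| ≤ M * ((a - a') + (b' - b)) + δ * (b - a) := by
  have hleft := abs_intervalIntegral_le_of_forall_mem_Ioo ha
    fun x hx => hM x (Ioo_subset_Ioo_right (hab.trans hb) hx)
  have hright := abs_intervalIntegral_le_of_forall_mem_Ioo hb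
    fun x hx => hM x (Ioo_subset_Ioo_left (ha.trans hab) hx)
  have hmid := abs_intervalIntegral_le_of_forall_mem_Ioo hab hδ
  have hsplit : (∫ x in a'..b', f₁ x) - ∫ x in a..b, f₂ x =
      (∫ x in a'..a, f₁ x) + (∫ x in a..b, f₁ x - f₂ x) + ∫ x in b..b', f₁ x := by
    have hab' : a' ≤ b' := ha.trans (hab.trans hb)
    have hI : ∀ {p q}, p ∈ Icc a' b' → q ∈ Icc a' b' → IntervalIntegrable f₁ volume p q :=
      fun hp hq => hf₁.mono_set (uIcc_of_le hab' ▸ uIcc_subset_Icc hp hq)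
    have ha' : a' ∈ Icc a' b' := left_mem_Icc.2 hab'
    have hb' : b' ∈ Icc a' b' := right_mem_Icc.2 hab'
    have ha_mem : a ∈ Icc a' b' := ⟨ha, hab.trans hb⟩
    have hb_mem : b ∈ Icc a' b' := ⟨ha.trans hab, hb⟩
    rw [intervalIntegral.integral_sub (hI ha_mem hb_mem) hf₂,
      ← intervalIntegral.integral_add_adjacent_intervals (hI ha' ha_mem) (hI ha_mem hb'),
      ← intervalIntegral.integral_add_adjacent_intervals (hI ha_mem hb_mem) (hI hb_mem hb')]
    ring
  rw [hsplit]
  calc _ ≤ |∫ x in a'..a, f₁ x| + |∫ x in a..b, f₁ x - f₂ x| + |∫ x in b..b', f₁ x| :=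
        abs_add_three _ _ _
    _ ≤ M * (a - a') + δ * (b - a) + M * (b' - b) := by gcongr
    _ = _ := by ring

end IntervalEstimates

section Flux

variable {Φ : ℝ → ℝ} {K : ℝ≥0}

theorem abs_integral_comp_sub_mul_sub_le (hΦ : LipschitzWith K Φ) (hΦ1 : ∀ z, |Φ z| ≤ 1)
    {u v : ℝ → ℝ} {a a' b b' c c' M ε : ℝ} (ha : a' ≤ a) (hab : a ≤ b) (hb : b ≤ b')
    (hu : ContinuousOn u (Ioo a b)) (hv : ContinuousOn v (Ioo a' b'))
    (hub : ∀ x ∈ Ioo a b, |u x| ≤ M) (hvb : ∀ x ∈ Ioo a' b', |v x| ≤ M)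
    (huv : ∀ x ∈ Ioo a b, |v x - u x| ≤ ε) :
    |(∫ x in a'..b', Φ (x - c') * v x) - ∫ x in a..b, Φ (x - c) * u x| ≤
      M * ((a - a') + (b' - b)) + (ε + K * |c' - c| * M) * (b - a) := by
  have hbound : ∀ {w : ℝ → ℝ} {s : Set ℝ} (d : ℝ), (∀ x ∈ s, |w x| ≤ M) →
      ∀ x ∈ s, |Φ (x - d) * w x| ≤ M := fun d hw x hx => by
    rw [abs_mul]
    exact (mul_le_of_le_one_left (abs_nonneg _) (hΦ1 _)).trans (hw x hx)
  have hcont : ∀ {w : ℝ → ℝ} {s : Set ℝ} (d : ℝ), ContinuousOn w s →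
      ContinuousOn (fun x => Φ (x - d) * w x) s := fun d hw =>
    (hΦ.continuous.comp (continuous_sub_right d)).continuousOn.mul hw
  refine abs_intervalIntegral_sub_le_of_subinterval ha hab hb
    (intervalIntegrable_of_continuousOn_Ioo (ha.trans (hab.trans hb)) (hcont c' hv)
      (hbound c' hvb))
    (intervalIntegrable_of_continuousOn_Ioo hab (hcont c hu) (hbound c hub))
    (hbound c' hvb) fun x hx => ?_
  have hΦ' : |Φ (x - c') - Φ (x - c)| ≤ K * |c' - c| := by
    have := hΦ.dist_le_mul (x - c') (x - c)
    rwa [Real.dist_eq, Real.dist_eq, sub_sub_sub_cancel_left, abs_sub_comm c] at this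
  calc |Φ (x - c') * v x - Φ (x - c) * u x|
      = |Φ (x - c') * (v x - u x) + (Φ (x - c') - Φ (x - c)) * u x| := by ring_nf
    _ ≤ |Φ (x - c')| * |v x - u x| + |Φ (x - c') - Φ (x - c)| * |u x| := by
      rw [← abs_mul, ← abs_mul]; exact abs_add_le _ _
    _ ≤ 1 * ε + K * |c' - c| * M := by
      gcongr
      · exact hΦ1 _
      · exact huv x hx
      · exact hub x hx
    _ = ε + K * |c' - c| * M := by ring

end Flux

theorem tendsto_zero_of_hasDerivAt_of_le_add {q p ω : ℝ → ℝ} {a C L ℓ : ℝ}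
    (hq : ∀ t, a < t → HasDerivAt q (p t) t) (hp : ∀ t, a < t → 0 ≤ p t)
    (hpω : ∀ t s, a < t → t ≤ s → p t ≤ p s + C * ((s - t) + (ω s - ω t)))
    (hqL : Tendsto q atTop (𝓝 L)) (hωℓ : Tendsto ω atTop (𝓝 ℓ)) :
    Tendsto p atTop (𝓝 0) := by
  refine tendsto_order.2 ⟨fun b hb => (eventually_gt_atTop a).mono fun t ht =>
    hb.trans_le (hp t ht), fun ε hε => ?_⟩
  obtain ⟨δ, hδ, hCδ⟩ := exists_pos_mul_lt (half_pos hε) (2 * |C|)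
  have hωδ : ∀ᶠ t in atTop, ∀ s, t ≤ s → |ω s - ω t| < δ := by
    obtain ⟨N, hN⟩ := Metric.cauchySeq_iff.1 hωℓ.cauchySeq δ hδ
    exact eventually_atTop.2 ⟨N, fun t ht s hts => hN s (ht.trans hts) t ht⟩
  have hqδ : ∀ᶠ t in atTop, q (t + δ) - q t < ε / 2 * δ := by
    have hlim : Tendsto (fun t => q (t + δ) - q t) atTop (𝓝 0) := by
      simpa using (hqL.comp (tendsto_atTop_add_const_right atTop δ tendsto_id)).sub hqL
    exact hlim.eventually (gt_mem_nhds (by positivity))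
  filter_upwards [eventually_gt_atTop a, hωδ, hqδ] with t ht htω htq
  have hlow : ∀ s ∈ Icc t (t + δ), p t - 2 * |C| * δ ≤ p s := by
    intro s hs
    have hE : |(s - t) + (ω s - ω t)| ≤ 2 * δ := by
      have := htω s hs.1
      rw [abs_lt] at this; rw [abs_le]
      constructor <;> linarith [hs.1, hs.2]
    have hCE : C * ((s - t) + (ω s - ω t)) ≤ 2 * |C| * δ := by
      rw [mul_comm 2, mul_assoc]
      exact (le_abs_self _).trans (abs_mul C _ ▸ mul_le_mul_of_nonneg_left hE (abs_nonneg C))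
    linarith [hpω t s ht hs.1]
  have hderiv : ∀ x ∈ Icc t (t + δ), HasDerivAt q (p x) x := fun x hx =>
    hq x (ht.trans_le hx.1)
  have hgrowth := (convex_Icc t (t + δ)).mul_sub_le_image_sub_of_le_deriv
    (fun x hx => (hderiv x hx).continuousAt.continuousWithinAt)
    (fun x hx => (hderiv x (interior_subset hx)).differentiableAt.differentiableWithinAt)
    (fun x hx => (hderiv x (interior_subset hx)).deriv ▸ hlow x (interior_subset hx))
    t (left_mem_Icc.2 (by linarith)) (t + δ) (right_mem_Icc.2 (by linarith)) (by linarith)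
  rw [add_sub_cancel_left] at hgrowth
  have : p t - 2 * |C| * δ < ε / 2 := lt_of_mul_lt_mul_right (hgrowth.trans_lt htq) hδ.le
  linarith

structure IsExpandingDomain (g h : ℝ → ℝ) (D : ℝ) : Prop where
  antitoneOn : AntitoneOn g (Ici 0)
  monotoneOn : MonotoneOn h (Ici 0)
  lt : ∀ t, 0 ≤ t → g t < h t
  sub_le : ∀ t, 0 ≤ t → h t - g t ≤ D

theorem isExpandingDomain_of_hasDerivWithinAt {g h g' h' : ℝ → ℝ} {ginf hinf : ℝ}
    (hg : ∀ t, 0 ≤ t → HasDerivWithinAt g (g' t) (Ici 0) t)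
    (hh : ∀ t, 0 ≤ t → HasDerivWithinAt h (h' t) (Ici 0) t)
    (hg' : ∀ t, 0 ≤ t → g' t ≤ 0) (hh' : ∀ t, 0 ≤ t → 0 ≤ h' t) (hgh0 : g 0 < h 0)
    (hginf : Tendsto g atTop (𝓝 ginf)) (hhinf : Tendsto h atTop (𝓝 hinf)) :
    IsExpandingDomain g h (hinf - ginf) := by
  have hanti : AntitoneOn g (Ici 0) := antitoneOn_of_hasDerivWithinAt_nonpos (convex_Ici 0)
    (fun t ht => (hg t ht).continuousWithinAt)
    (fun t ht => (hg t (interior_subset ht)).mono interior_subset)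
    (fun t ht => hg' t (interior_subset ht))
  have hmono : MonotoneOn h (Ici 0) := monotoneOn_of_hasDerivWithinAt_nonneg (convex_Ici 0)
    (fun t ht => (hh t ht).continuousWithinAt)
    (fun t ht => (hh t (interior_subset ht)).mono interior_subset)
    (fun t ht => hh' t (interior_subset ht))
  have hle : ∀ t, 0 ≤ t → ginf ≤ g t ∧ h t ≤ hinf := fun t ht =>
    ⟨le_of_tendsto hginf (eventually_atTop.2 ⟨t, fun s hs => hanti ht (ht.trans hs) hs⟩),
      ge_of_tendsto hhinf (eventually_atTop.2 ⟨t, fun s hs => hmono ht (ht.trans hs) hs⟩)⟩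
  refine ⟨hanti, hmono, fun t ht => ?_, fun t ht => by linarith [hle t ht]⟩
  linarith [hanti self_mem_Ici ht ht, hmono self_mem_Ici ht ht]

structure BoundedLipschitzInTime (g h : ℝ → ℝ) (M : ℝ) (w : ℝ → ℝ → ℝ) : Prop where
  continuousOn : ∀ t, 0 < t → ContinuousOn (w t) (Ioo (g t) (h t))
  bound : ∀ t, 0 < t → ∀ x ∈ Ioo (g t) (h t), |w t x| ≤ M
  lipschitz : ∀ t s, 0 < t → t ≤ s → ∀ x ∈ Ioo (g t) (h t), |w s x - w t x| ≤ M * (s - t)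

section MovingDomain

variable {g h : ℝ → ℝ} {M D : ℝ} {w : ℝ → ℝ → ℝ}

theorem Ioo_subset_Ioo_of_antitoneOn_of_monotoneOn (hg : AntitoneOn g (Ici 0))
    (hh : MonotoneOn h (Ici 0)) {t s : ℝ} (ht : 0 ≤ t) (hts : t ≤ s) :
    Ioo (g t) (h t) ⊆ Ioo (g s) (h s) :=
  Ioo_subset_Ioo (hg ht (ht.trans hts) hts) (hh ht (ht.trans hts) hts)

theorem boundedLipschitzInTime_of_hasDerivAt {wt : ℝ → ℝ → ℝ} (hg : AntitoneOn g (Ici 0))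
    (hh : MonotoneOn h (Ici 0))
    (hcont : ContinuousOn (Function.uncurry w) {p : ℝ × ℝ | 0 < p.1 ∧ g p.1 < p.2 ∧ p.2 < h p.1})
    (hderiv : ∀ t x, 0 < t → x ∈ Ioo (g t) (h t) → HasDerivAt (fun τ => w τ x) (wt t x) t)
    (hw : ∀ t x, 0 < t → x ∈ Ioo (g t) (h t) → |w t x| ≤ M)
    (hwt : ∀ t x, 0 < t → x ∈ Ioo (g t) (h t) → |wt t x| ≤ M) :
    BoundedLipschitzInTime g h M w := by
  refine ⟨fun t ht => hcont.comp (Continuous.prodMk_right t).continuousOn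
    fun x hx => ⟨ht, hx.1, hx.2⟩, fun t ht x hx => hw t x ht hx, fun t s ht hts x hx => ?_⟩
  have hmem : ∀ τ ∈ Icc t s, 0 < τ ∧ x ∈ Ioo (g τ) (h τ) := fun τ hτ =>
    ⟨ht.trans_le hτ.1, Ioo_subset_Ioo_of_antitoneOn_of_monotoneOn hg hh ht.le hτ.1 hx⟩
  simpa [Real.norm_eq_abs] using norm_image_sub_le_of_norm_deriv_le_segment'
    (fun τ hτ => (hderiv τ x (hmem τ hτ).1 (hmem τ hτ).2).hasDerivWithinAt)
    (fun τ hτ => (hwt τ x (hmem τ (Ico_subset_Icc_self hτ)).1 (hmem τ (Ico_subset_Icc_self hτ)).2))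
    s (right_mem_Icc.2 hts)

theorem BoundedLipschitzInTime.abs_integral_sub_le (hw : BoundedLipschitzInTime g h M w)
    (hdom : IsExpandingDomain g h D) {Φ : ℝ → ℝ} {K : ℝ≥0} (hΦ : LipschitzWith K Φ)
    (hΦ1 : ∀ z, |Φ z| ≤ 1) {c : ℝ → ℝ} (hc : c = g ∨ c = h) {t s : ℝ} (ht : 0 < t)
    (hts : t ≤ s) :
    |(∫ x in g s..h s, Φ (x - c s) * w s x) - ∫ x in g t..h t, Φ (x - c t) * w t x| ≤
      M * (1 + D * (1 + K)) * ((s - t) + ((h s - g s) - (h t - g t))) := by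
  have hgs : g s ≤ g t := hdom.antitoneOn ht.le (ht.le.trans hts) hts
  have hhs : h t ≤ h s := hdom.monotoneOn ht.le (ht.le.trans hts) hts
  have hgh := hdom.lt t ht.le
  have hD := hdom.sub_le t ht.le
  have hM : 0 ≤ M := (abs_nonneg _).trans
    (hw.bound t ht ((g t + h t) / 2) ⟨by linarith, by linarith⟩)
  have hc' : |c s - c t| ≤ (h s - g s) - (h t - g t) := by
    rcases hc with rfl | rfl <;> rw [abs_le] <;> constructor <;> linarith
  have key := abs_integral_comp_sub_mul_sub_le hΦ hΦ1 hgs hgh.le hhs (hw.continuousOn t ht)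
    (hw.continuousOn s (ht.trans_le hts)) (hw.bound t ht) (hw.bound s (ht.trans_le hts))
    (hw.lipschitz t s ht hts) (c := c t) (c' := c s)
  have hτ : 0 ≤ s - t := sub_nonneg.2 hts
  have hE : 0 ≤ (h s - g s) - (h t - g t) := by linarith
  have hD0 : 0 ≤ D := (sub_pos.2 hgh).le.trans hD
  have hK : (0 : ℝ) ≤ K := K.2
  calc _ ≤ M * ((g t - g s) + (h s - h t)) + (M * (s - t) + K * |c s - c t| * M) * (h t - g t) :=
        key
    _ ≤ M * ((h s - g s) - (h t - g t)) +
          (M * (s - t) + K * ((h s - g s) - (h t - g t)) * M) * D := by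
        gcongr
        exact le_of_eq (by ring)
    _ ≤ _ := by
        nlinarith [mul_nonneg hM hτ, mul_nonneg (mul_nonneg hM hD0) hE,
          mul_nonneg (mul_nonneg (mul_nonneg hM hD0) hK) hτ]

end MovingDomain

theorem KernelJ.exists_norm_le {J : ℝ → ℝ} (hJ : KernelJ J) : ∃ C : ℝ≥0, ∀ z, ‖J z‖ ≤ C := by
  obtain ⟨-, hnn, -, -, -, -, C, hC⟩ := hJ
  exact ⟨C.toNNReal, fun z => (Real.norm_of_nonneg (hnn z)).trans_le
    ((hC ⟨z, rfl⟩).trans (Real.le_coe_toNNReal C))⟩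

section Speeds

variable {J : ℝ → ℝ} {g h : ℝ → ℝ} {M D : ℝ} {w : ℝ → ℝ → ℝ}

theorem BoundedLipschitzInTime.exists_abs_fluxR_sub_le (hw : BoundedLipschitzInTime g h M w)
    (hdom : IsExpandingDomain g h D) (hJ : KernelJ J) :
    ∃ A, ∀ t s, 0 < t → t ≤ s → |fluxR J (w s) (g s) (h s) - fluxR J (w t) (g t) (h t)| ≤
      A * ((s - t) + ((h s - g s) - (h t - g t))) := by
  obtain ⟨C, hC⟩ := hJ.exists_norm_le
  obtain ⟨-, hnn, -, -, hint, hone, -⟩ := hJ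
  exact ⟨_, fun t s ht hts => by
    simpa only [fluxR_eq] using hw.abs_integral_sub_le hdom (lipschitzWith_kernelCdf hint hC)
      (abs_kernelCdf_le_one hnn hint hone) (Or.inr rfl) ht hts⟩

theorem BoundedLipschitzInTime.exists_abs_fluxL_sub_le (hw : BoundedLipschitzInTime g h M w)
    (hdom : IsExpandingDomain g h D) (hJ : KernelJ J) :
    ∃ A, ∀ t s, 0 < t → t ≤ s → |fluxL J (w s) (g s) (h s) - fluxL J (w t) (g t) (h t)| ≤
      A * ((s - t) + ((h s - g s) - (h t - g t))) := by
  obtain ⟨C, hC⟩ := hJ.exists_norm_le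
  obtain ⟨-, hnn, heven, -, hint, hone, -⟩ := hJ
  exact ⟨_, fun t s ht hts => by
    simpa only [fluxL_eq heven] using hw.abs_integral_sub_le hdom (Φ := fun z => kernelCdf J (-z))
      ((lipschitzWith_kernelCdf hint hC).comp LipschitzWith.id.neg)
      (fun z => abs_kernelCdf_le_one hnn hint hone (-z)) (Or.inl rfl) ht hts⟩

end Speeds

theorem exists_le_add_of_eq_add {p I₁ I₂ ω : ℝ → ℝ} {β₁ β₂ : ℝ} (hβ₁ : 0 ≤ β₁) (hβ₂ : 0 ≤ β₂)
    (hp : ∀ t, 0 < t → p t = β₁ * I₁ t + β₂ * I₂ t)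
    (hI₁ : ∃ A, ∀ t s, 0 < t → t ≤ s → |I₁ s - I₁ t| ≤ A * ((s - t) + (ω s - ω t)))
    (hI₂ : ∃ A, ∀ t s, 0 < t → t ≤ s → |I₂ s - I₂ t| ≤ A * ((s - t) + (ω s - ω t))) :
    ∃ C, ∀ t s, 0 < t → t ≤ s → p t ≤ p s + C * ((s - t) + (ω s - ω t)) := by
  obtain ⟨A₁, hA₁⟩ := hI₁
  obtain ⟨A₂, hA₂⟩ := hI₂
  refine ⟨β₁ * A₁ + β₂ * A₂, fun t s ht hts => ?_⟩
  have h₁ := mul_le_mul_of_nonneg_left (neg_le_of_abs_le (hA₁ t s ht hts)) hβ₁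
  have h₂ := mul_le_mul_of_nonneg_left (neg_le_of_abs_le (hA₂ t s ht hts)) hβ₂
  rw [hp t ht, hp s (ht.trans_le hts)]
  linarith

theorem boundary_speeds_tend_to_zero_general
    (β1 β2 : ℝ) (J1 J2 : ℝ → ℝ) (g h g' h' : ℝ → ℝ)
    (w1 w2 w1t w2t : ℝ → ℝ → ℝ) (M ginf hinf : ℝ)
    (hβ1 : 0 < β1) (hβ2 : 0 < β2) (hJ1 : KernelJ J1) (hJ2 : KernelJ J2)
    (hgh0 : g 0 < h 0)
    (hg' : ∀ t, 0 ≤ t → HasDerivWithinAt g (g' t) (Set.Ici 0) t)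
    (hh' : ∀ t, 0 ≤ t → HasDerivWithinAt h (h' t) (Set.Ici 0) t)
    (hg'le : ∀ t, 0 ≤ t → g' t ≤ 0) (hh'ge : ∀ t, 0 ≤ t → 0 ≤ h' t)
    (hw1cont : ContinuousOn (Function.uncurry w1)
      {p : ℝ × ℝ | 0 < p.1 ∧ g p.1 < p.2 ∧ p.2 < h p.1})
    (hw2cont : ContinuousOn (Function.uncurry w2)
      {p : ℝ × ℝ | 0 < p.1 ∧ g p.1 < p.2 ∧ p.2 < h p.1})
    (hw1t : ∀ t x, 0 < t → x ∈ Set.Ioo (g t) (h t) →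
      HasDerivAt (fun τ => w1 τ x) (w1t t x) t)
    (hw2t : ∀ t x, 0 < t → x ∈ Set.Ioo (g t) (h t) →
      HasDerivAt (fun τ => w2 τ x) (w2t t x) t)
    (hbd : ∀ t x, 0 < t → x ∈ Set.Ioo (g t) (h t) →
      |w1 t x| ≤ M ∧ |w2 t x| ≤ M ∧ |w1t t x| ≤ M ∧ |w2t t x| ≤ M)
    (heqh : ∀ t, 0 ≤ t →
      h' t = β1 * fluxR J1 (w1 t) (g t) (h t) + β2 * fluxR J2 (w2 t) (g t) (h t))
    (heqg : ∀ t, 0 ≤ t →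
      g' t = -(β1 * fluxL J1 (w1 t) (g t) (h t) + β2 * fluxL J2 (w2 t) (g t) (h t)))
    (hglim : Tendsto g atTop (nhds ginf)) (hhlim : Tendsto h atTop (nhds hinf)) :
    Tendsto g' atTop (nhds 0) ∧ Tendsto h' atTop (nhds 0) := by
  have hdom := isExpandingDomain_of_hasDerivWithinAt hg' hh' hg'le hh'ge hgh0 hglim hhlim
  have hw1 := boundedLipschitzInTime_of_hasDerivAt hdom.antitoneOn hdom.monotoneOn hw1cont hw1t
    (fun t x ht hx => (hbd t x ht hx).1) (fun t x ht hx => (hbd t x ht hx).2.2.1)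
  have hw2 := boundedLipschitzInTime_of_hasDerivAt hdom.antitoneOn hdom.monotoneOn hw2cont hw2t
    (fun t x ht hx => (hbd t x ht hx).2.1) (fun t x ht hx => (hbd t x ht hx).2.2.2)
  have hderiv : ∀ {f f' : ℝ → ℝ}, (∀ t, 0 ≤ t → HasDerivWithinAt f (f' t) (Set.Ici 0) t) →
      ∀ t, 0 < t → HasDerivAt f (f' t) t := fun hf t ht =>
    (hf t ht.le).hasDerivAt (Ici_mem_nhds ht)
  obtain ⟨Cg, hCg⟩ := exists_le_add_of_eq_add (p := fun t => -g' t) hβ1.le hβ2.le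
    (fun t ht => by rw [heqg t ht.le, neg_neg])
    (hw1.exists_abs_fluxL_sub_le hdom hJ1) (hw2.exists_abs_fluxL_sub_le hdom hJ2)
  obtain ⟨Ch, hCh⟩ := exists_le_add_of_eq_add hβ1.le hβ2.le (fun t ht => heqh t ht.le)
    (hw1.exists_abs_fluxR_sub_le hdom hJ1) (hw2.exists_abs_fluxR_sub_le hdom hJ2)
  have hω := hhlim.sub hglim
  refine ⟨?_, tendsto_zero_of_hasDerivAt_of_le_add (hderiv hh') (fun t ht => hh'ge t ht.le)
    hCh hhlim hω⟩
  simpa using (tendsto_zero_of_hasDerivAt_of_le_add (fun t ht => (hderiv hg' t ht).neg)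
    (fun t ht => neg_nonneg.2 (hg'le t ht.le)) hCg hglim.neg hω).neg

/-- Lemma 3.1: if the moving boundaries driven by the flux
conditions converge to a finite interval, then their speeds tend to 0. -/
theorem boundary_speeds_tend_to_zero
    (β1 β2 : ℝ) (J1 J2 : ℝ → ℝ) (g h g' h' : ℝ → ℝ)
    (w1 w2 w1t w2t : ℝ → ℝ → ℝ) (M ginf hinf : ℝ)
    (hβ1 : 0 < β1) (hβ2 : 0 < β2) (hJ1 : KernelJ J1) (hJ2 : KernelJ J2)
    (hgh0 : g 0 < h 0)
    (hg' : ∀ t, 0 ≤ t → HasDerivWithinAt g (g' t) (Set.Ici 0) t)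
    (hh' : ∀ t, 0 ≤ t → HasDerivWithinAt h (h' t) (Set.Ici 0) t)
    (hg'le : ∀ t, 0 ≤ t → g' t ≤ 0) (hh'ge : ∀ t, 0 ≤ t → 0 ≤ h' t)
    (hw1cont : ContinuousOn (Function.uncurry w1)
      {p : ℝ × ℝ | 0 < p.1 ∧ g p.1 < p.2 ∧ p.2 < h p.1})
    (hw2cont : ContinuousOn (Function.uncurry w2)
      {p : ℝ × ℝ | 0 < p.1 ∧ g p.1 < p.2 ∧ p.2 < h p.1})
    (hw1tcont : ContinuousOn (Function.uncurry w1t)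
      {p : ℝ × ℝ | 0 < p.1 ∧ g p.1 < p.2 ∧ p.2 < h p.1})
    (hw2tcont : ContinuousOn (Function.uncurry w2t)
      {p : ℝ × ℝ | 0 < p.1 ∧ g p.1 < p.2 ∧ p.2 < h p.1})
    (hw1t : ∀ t x, 0 < t → x ∈ Set.Ioo (g t) (h t) →
      HasDerivAt (fun τ => w1 τ x) (w1t t x) t)
    (hw2t : ∀ t x, 0 < t → x ∈ Set.Ioo (g t) (h t) →
      HasDerivAt (fun τ => w2 τ x) (w2t t x) t)
    (hbd : ∀ t x, 0 < t → x ∈ Set.Ioo (g t) (h t) →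
      |w1 t x| ≤ M ∧ |w2 t x| ≤ M ∧ |w1t t x| ≤ M ∧ |w2t t x| ≤ M)
    (hext1 : ∀ t x, 0 ≤ t → x ∉ Set.Icc (g t) (h t) → w1 t x = 0)
    (hext2 : ∀ t x, 0 ≤ t → x ∉ Set.Icc (g t) (h t) → w2 t x = 0)
    (heqh : ∀ t, 0 ≤ t →
      h' t = β1 * fluxR J1 (w1 t) (g t) (h t) + β2 * fluxR J2 (w2 t) (g t) (h t))
    (heqg : ∀ t, 0 ≤ t →
      g' t = -(β1 * fluxL J1 (w1 t) (g t) (h t) + β2 * fluxL J2 (w2 t) (g t) (h t)))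
    (hglim : Tendsto g atTop (nhds ginf)) (hhlim : Tendsto h atTop (nhds hinf)) :
    Tendsto g' atTop (nhds 0) ∧ Tendsto h' atTop (nhds 0) :=
  boundary_speeds_tend_to_zero_general β1 β2 J1 J2 g h g' h' w1 w2 w1t w2t M ginf hinf hβ1 hβ2 hJ1
    hJ2 hgh0 hg' hh' hg'le hh'ge hw1cont hw2cont hw1t hw2t hbd heqh heqg hglim hhlim
end
end

section
/- Let J satisfy condition (J) and suppose in addition J(x) > 0 for all x ∈ ℝ. Suppose g, h ∈ C¹([0,∞)) with g(0) < h(0), g'(t) ≤ 0, h'(t) ≥ 0, and lim_{t→∞} h(t) − lim_{t→∞} g(t) < ∞. Suppose for some positive constants β and M the function w satisfies 0 ≤ w ≤ M on {(t,x): t > 0, g(t) < x < h(t)}, w(t, g(t)) = w(t, h(t)) = 0 for all t ≥ 0, h'(t) ≥ β ∫_{g(t)}^{h(t)} ∫_{h(t)}^{∞} J(x−y) w(t,x) dy dx for all t > 0, and lim_{t→∞} h'(t) = 0. Then lim_{t→∞} ∫_{g(t)}^{h(t)} w(t,x) dx = 0 and ∫_0^∞ ∫_{g(t)}^{h(t)}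 w(t,x) dx dt < ∞. -/
open MeasureTheory Filter

noncomputable section

/-! Since `g` decreases to `ginf` and `h` increases to `hinf`, every domain `[g t, h t]` lies in
`[ginf, hinf]`. The positive continuous kernel `J` is bounded below by some `δ > 0` on
`[ginf - hinf - 1, 0]`, so each point of the domain sends at least `δ` of kernel mass past `h t`,
and `β δ ∫ w t ≤ β fluxR ≤ h' t`. Hence the mass tends to `0` with `h'`, and it is integrable in
time because `h' ≥ 0` is integrable, with integral `hinf - h 0`. -/

open Set Topology

lemma monotoneOn_Ici_of_hasDerivWithinAt_nonneg {f f' : ℝ → ℝ} {a : ℝ}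
    (hf : ∀ t, a ≤ t → HasDerivWithinAt f (f' t) (Ici a) t) (hf' : ∀ t, a ≤ t → 0 ≤ f' t) :
    MonotoneOn f (Ici a) :=
  monotoneOn_of_hasDerivWithinAt_nonneg (convex_Ici a) (fun t ht => (hf t ht).continuousWithinAt)
    (fun t ht => by
      rw [interior_Ici] at ht ⊢
      exact (hf t ht.le).mono Ioi_subset_Ici_self)
    (fun t ht => hf' t (interior_subset ht))

lemma antitoneOn_Ici_of_hasDerivWithinAt_nonpos {f f' : ℝ → ℝ} {a : ℝ}
    (hf : ∀ t, a ≤ t → HasDerivWithinAt f (f' t) (Ici a) t) (hf' : ∀ t, a ≤ t → f' t ≤ 0) :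
    AntitoneOn f (Ici a) :=
  antitoneOn_of_hasDerivWithinAt_nonpos (convex_Ici a) (fun t ht => (hf t ht).continuousWithinAt)
    (fun t ht => by
      rw [interior_Ici] at ht ⊢
      exact (hf t ht.le).mono Ioi_subset_Ici_self)
    (fun t ht => hf' t (interior_subset ht))

lemma integrableOn_Ioi_of_hasDerivWithinAt_nonneg {f f' : ℝ → ℝ} {a l : ℝ}
    (hf : ∀ t, a ≤ t → HasDerivWithinAt f (f' t) (Ici a) t) (hf' : ∀ t, a ≤ t → 0 ≤ f' t)
    (hl : Tendsto f atTop (𝓝 l)) : IntegrableOn f' (Ioi a) :=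
  integrableOn_Ioi_deriv_of_nonneg (hf a le_rfl).continuousWithinAt
    (fun t ht => (hf t (le_of_lt ht)).hasDerivAt (Ici_mem_nhds ht))
    (fun t ht => hf' t (le_of_lt ht)) hl

section Limits

variable {α β : Type*} [Preorder α] [IsDirectedOrder α] [Nonempty α]
  [TopologicalSpace β] [Preorder β] [OrderClosedTopology β] {f : α → β} {a t : α} {l : β}

lemma MonotoneOn.le_of_tendsto_atTop (hf : MonotoneOn f (Ici a)) (hl : Tendsto f atTop (𝓝 l))
    (ht : a ≤ t) : f t ≤ l :=
  ge_of_tendsto hl <| (eventually_ge_atTop t).mono fun _ hs => hf ht (ht.trans hs) hs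

lemma AntitoneOn.ge_of_tendsto_atTop (hf : AntitoneOn f (Ici a)) (hl : Tendsto f atTop (𝓝 l))
    (ht : a ≤ t) : l ≤ f t :=
  le_of_tendsto hl <| (eventually_ge_atTop t).mono fun _ hs => hf ht (ht.trans hs) hs

end Limits

lemma exists_pos_le_setIntegral_Ioi_sub {J : ℝ → ℝ} (hJc : Continuous J) (hJpos : ∀ x, 0 < J x)
    (hJint : Integrable J) (a b : ℝ) :
    ∃ δ > 0, ∀ x T, a ≤ x → x ≤ T → T ≤ b → δ ≤ ∫ y in Ioi T, J (x - y) := by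
  obtain ⟨δ, hδ, hJδ⟩ := isCompact_Icc.exists_forall_le' (s := Icc (a - b - 1) 0) (a := 0)
    hJc.continuousOn fun z _ => hJpos z
  refine ⟨δ, hδ, fun x T hax hxT hTb => ?_⟩
  have hJx : Integrable (fun y => J (x - y)) := (integrable_comp_sub_left J x).2 hJint
  calc δ = ∫ _ in Ioc T (T + 1), δ := by simp
    _ ≤ ∫ y in Ioc T (T + 1), J (x - y) :=
      setIntegral_mono_on (integrableOn_const measure_Ioc_lt_top.ne) hJx.integrableOn
        measurableSet_Ioc fun y hy => hJδ _ ⟨by linarith [hy.2], by linarith [hy.1]⟩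
    _ ≤ ∫ y in Ioi T, J (x - y) :=
      setIntegral_mono_set hJx.integrableOn (ae_of_all _ fun y => (hJpos _).le)
        Ioc_subset_Ioi_self.eventuallyLE

lemma intervalIntegral_nonneg_of_nonneg_on_Ioo {u : ℝ → ℝ} {a b : ℝ} (hab : a ≤ b)
    (hu0 : ∀ x ∈ Ioo a b, 0 ≤ u x) : 0 ≤ ∫ x in a..b, u x := by
  rw [intervalIntegral.integral_of_le hab, integral_Ioc_eq_integral_Ioo]
  exact setIntegral_nonneg measurableSet_Ioo hu0

lemma mul_intervalIntegral_le_fluxR {J u : ℝ → ℝ} {a b δ : ℝ} (hab : a ≤ b) (hJm : Measurable J)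
    (hJnn : ∀ x, 0 ≤ J x) (hJint : Integrable J) (hu : IntervalIntegrable u volume a b)
    (hu0 : ∀ x ∈ Ioo a b, 0 ≤ u x) (hδ : ∀ x ∈ Ioo a b, δ ≤ ∫ y in Ioi b, J (x - y)) :
    δ * ∫ x in a..b, u x ≤ fluxR J u a b := by
  set tail : ℝ → ℝ := fun x => ∫ y in Ioi b, J (x - y)
  have htail_meas : StronglyMeasurable tail :=
    StronglyMeasurable.integral_prod_right (f := fun x y => J (x - y))
      (hJm.comp measurable_sub).stronglyMeasurable
  have htail_le : ∀ x, ‖tail x‖ ≤ ∫ y, J y := fun x => by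
    have hJx : Integrable (fun y => J (x - y)) := (integrable_comp_sub_left J x).2 hJint
    rw [Real.norm_of_nonneg (setIntegral_nonneg measurableSet_Ioi fun y _ => hJnn _),
      ← integral_sub_left_eq_self J volume x]
    exact setIntegral_le_integral hJx (ae_of_all _ fun y => hJnn _)
  have htail_mul : IntervalIntegrable (fun x => tail x * u x) volume a b :=
    (intervalIntegrable_iff_integrableOn_Ioc_of_le hab).2 <|
      hu.1.bdd_mul htail_meas.aestronglyMeasurable (ae_of_all _ htail_le)
  have hflux : fluxR J u a b = ∫ x in a..b, tail x * u x := by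
    simp only [fluxR, tail, integral_mul_const]
  rw [hflux, ← intervalIntegral.integral_const_mul]
  exact intervalIntegral.integral_mono_on_of_le_Ioo hab (hu.const_mul δ) htail_mul
    fun x hx => mul_le_mul_of_nonneg_right (hδ x hx) (hu0 x hx)

lemma isClosed_setOf_le_le_of_continuousOn {g h : ℝ → ℝ} {a : ℝ} (hg : ContinuousOn g (Ici a))
    (hh : ContinuousOn h (Ici a)) :
    IsClosed {p : ℝ × ℝ | a ≤ p.1 ∧ g p.1 ≤ p.2 ∧ p.2 ≤ h p.1} := by
  have h₀ : IsClosed {p : ℝ × ℝ | a ≤ p.1} := isClosed_le continuous_const continuous_fst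
  have h₁ := h₀.isClosed_le (hg.comp continuous_fst.continuousOn fun p hp => hp)
    continuous_snd.continuousOn
  have h₂ := h₁.isClosed_le continuous_snd.continuousOn
    (hh.comp continuous_fst.continuousOn fun p hp => hp.1)
  convert h₂ using 1
  ext p
  simp [and_assoc]

lemma intervalIntegral_eq_integral_of_eq_zero_off {E : Type*} [NormedAddCommGroup E]
    [NormedSpace ℝ E] {f : ℝ → E} {a b : ℝ} (hab : a ≤ b) (hf : ∀ x ∉ Icc a b, f x = 0) :
    ∫ x in a..b, f x = ∫ x, f x := by
  rw [intervalIntegral.integral_of_le hab, ← integral_Icc_eq_integral_Ioc,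
    setIntegral_eq_integral_of_forall_compl_eq_zero hf]

lemma aestronglyMeasurable_intervalIntegral_of_continuousOn {E : Type*} [NormedAddCommGroup E]
    [NormedSpace ℝ E] {g h : ℝ → ℝ} {w : ℝ → ℝ → E} {a : ℝ} (μ : Measure ℝ) [SFinite μ]
    (hg : ContinuousOn g (Ici a)) (hh : ContinuousOn h (Ici a)) (hgh : ∀ t, a ≤ t → g t ≤ h t)
    (hw : ContinuousOn (Function.uncurry w) {p : ℝ × ℝ | a ≤ p.1 ∧ g p.1 ≤ p.2 ∧ p.2 ≤ h p.1})
    (hext : ∀ t x, a ≤ t → x ∉ Icc (g t) (h t) → w t x = 0) :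
    AEStronglyMeasurable (fun t => ∫ x in g t..h t, w t x) (μ.restrict (Ici a)) := by
  set Ω := {p : ℝ × ℝ | a ≤ p.1 ∧ g p.1 ≤ p.2 ∧ p.2 ≤ h p.1}
  have hΩ : MeasurableSet Ω := (isClosed_setOf_le_le_of_continuousOn hg hh).measurableSet
  have hind : ∀ t, a ≤ t → ∀ x, Ω.indicator (Function.uncurry w) (t, x) = w t x := by
    intro t ht x
    by_cases hx : x ∈ Icc (g t) (h t)
    · exact indicator_of_mem (show (t, x) ∈ Ω from ⟨ht, hx⟩) _
    · rw [indicator_of_notMem fun hp => hx ⟨hp.2.1, hp.2.2⟩, hext t x ht hx]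
  have hmeas : AEStronglyMeasurable (Ω.indicator (Function.uncurry w))
      ((μ.restrict (Ici a)).prod volume) :=
    (aestronglyMeasurable_indicator_iff hΩ).2 (hw.aestronglyMeasurable hΩ)
  refine hmeas.integral_prod_right'.congr ?_
  filter_upwards [ae_restrict_mem measurableSet_Ici] with t ht
  simp only [hind t ht]
  exact (intervalIntegral_eq_integral_of_eq_zero_off (hgh t ht) (hext t · ht)).symm

theorem mass_tends_to_zero_general
    (β M : ℝ) (J : ℝ → ℝ) (g h g' h' : ℝ → ℝ) (w : ℝ → ℝ → ℝ) (ginf hinf : ℝ)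
    (hβ : 0 < β) (hJ : KernelJ J) (hJpos : ∀ x, 0 < J x)
    (hgh0 : g 0 < h 0)
    (hg' : ∀ t, 0 ≤ t → HasDerivWithinAt g (g' t) (Set.Ici 0) t)
    (hh' : ∀ t, 0 ≤ t → HasDerivWithinAt h (h' t) (Set.Ici 0) t)
    (hg'le : ∀ t, 0 ≤ t → g' t ≤ 0) (hh'ge : ∀ t, 0 ≤ t → 0 ≤ h' t)
    (hglim : Tendsto g atTop (nhds ginf)) (hhlim : Tendsto h atTop (nhds hinf))
    (hwcont : ContinuousOn (Function.uncurry w)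
      {p : ℝ × ℝ | 0 ≤ p.1 ∧ g p.1 ≤ p.2 ∧ p.2 ≤ h p.1})
    (hwbd : ∀ t x, 0 < t → x ∈ Set.Ioo (g t) (h t) → 0 ≤ w t x ∧ w t x ≤ M)
    (hext : ∀ t x, 0 ≤ t → x ∉ Set.Icc (g t) (h t) → w t x = 0)
    (hflux : ∀ t, 0 < t → β * fluxR J (w t) (g t) (h t) ≤ h' t)
    (hh'lim : Tendsto h' atTop (nhds 0)) :
    Tendsto (fun t => ∫ x in (g t)..(h t), w t x) atTop (nhds 0) ∧
    IntegrableOn (fun t => ∫ x in (g t)..(h t), w t x) (Set.Ioi 0) := by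
  obtain ⟨hJc, hJnn, -, -, hJint, -, -⟩ := hJ
  have hh_mono := monotoneOn_Ici_of_hasDerivWithinAt_nonneg hh' hh'ge
  have hg_anti := antitoneOn_Ici_of_hasDerivWithinAt_nonpos hg' hg'le
  have hgh : ∀ t, 0 ≤ t → g t ≤ h t := fun t ht =>
    (hg_anti self_mem_Ici ht ht).trans (hgh0.le.trans (hh_mono self_mem_Ici ht ht))
  obtain ⟨δ, hδ, hkernel⟩ := exists_pos_le_setIntegral_Ioi_sub hJc hJpos hJint ginf hinf
  have hw_nonneg : ∀ t, 0 < t → ∀ x ∈ Ioo (g t) (h t), 0 ≤ w t x :=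
    fun t ht x hx => (hwbd t x ht hx).1
  have hmass_nonneg : ∀ t, 0 < t → 0 ≤ ∫ x in g t..h t, w t x := fun t ht =>
    intervalIntegral_nonneg_of_nonneg_on_Ioo (hgh t ht.le) (hw_nonneg t ht)
  have hmass_le : ∀ t, 0 < t → ∫ x in g t..h t, w t x ≤ (β * δ)⁻¹ * h' t := by
    intro t ht
    have hwt : IntervalIntegrable (w t) volume (g t) (h t) :=
      (hwcont.comp (Continuous.prodMk_right t).continuousOn
        fun x hx => ⟨ht.le, hx.1, hx.2⟩).intervalIntegrable_of_Icc (hgh t ht.le)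
    have hδ_mass := mul_intervalIntegral_le_fluxR (hgh t ht.le) hJc.measurable hJnn hJint hwt
      (hw_nonneg t ht) fun x hx => hkernel x (h t)
        ((hg_anti.ge_of_tendsto_atTop hglim ht.le).trans hx.1.le) hx.2.le
        (hh_mono.le_of_tendsto_atTop hhlim ht.le)
    rw [mul_inv_rev, mul_assoc, le_inv_mul_iff₀ hδ, le_inv_mul_iff₀ hβ]
    exact (mul_le_mul_of_nonneg_left hδ_mass hβ.le).trans (hflux t ht)
  refine ⟨squeeze_zero' ((eventually_gt_atTop 0).mono hmass_nonneg)
    ((eventually_gt_atTop 0).mono hmass_le) (by simpa using hh'lim.const_mul (β * δ)⁻¹), ?_⟩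
  have hmass_meas := aestronglyMeasurable_intervalIntegral_of_continuousOn volume
    (fun t ht => (hg' t ht).continuousWithinAt) (fun t ht => (hh' t ht).continuousWithinAt)
    hgh hwcont hext
  refine Integrable.mono'
    ((integrableOn_Ioi_of_hasDerivWithinAt_nonneg hh' hh'ge hhlim).const_mul (β * δ)⁻¹)
    (hmass_meas.mono_measure (Measure.restrict_mono Ioi_subset_Ici_self le_rfl)) ?_
  filter_upwards [ae_restrict_mem measurableSet_Ioi] with t ht
  rw [Real.norm_of_nonneg (hmass_nonneg t ht)]
  exact hmass_le t ht

/-- Lemma 3.2: if the right boundary speed dominates the flux of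
`w` and tends to 0, and the domain converges to a finite interval, then the
total mass of `w` tends to 0 and is integrable in time. -/
theorem mass_tends_to_zero
    (β M : ℝ) (J : ℝ → ℝ) (g h g' h' : ℝ → ℝ) (w : ℝ → ℝ → ℝ) (ginf hinf : ℝ)
    (hβ : 0 < β) (hM : 0 < M) (hJ : KernelJ J) (hJpos : ∀ x, 0 < J x)
    (hgh0 : g 0 < h 0)
    (hg' : ∀ t, 0 ≤ t → HasDerivWithinAt g (g' t) (Set.Ici 0) t)
    (hh' : ∀ t, 0 ≤ t → HasDerivWithinAt h (h' t) (Set.Ici 0) t)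
    (hg'le : ∀ t, 0 ≤ t → g' t ≤ 0) (hh'ge : ∀ t, 0 ≤ t → 0 ≤ h' t)
    (hglim : Tendsto g atTop (nhds ginf)) (hhlim : Tendsto h atTop (nhds hinf))
    (hwcont : ContinuousOn (Function.uncurry w)
      {p : ℝ × ℝ | 0 ≤ p.1 ∧ g p.1 ≤ p.2 ∧ p.2 ≤ h p.1})
    (hwbd : ∀ t x, 0 < t → x ∈ Set.Ioo (g t) (h t) → 0 ≤ w t x ∧ w t x ≤ M)
    (hwb : ∀ t, 0 ≤ t → w t (g t) = 0 ∧ w t (h t) = 0)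
    (hext : ∀ t x, 0 ≤ t → x ∉ Set.Icc (g t) (h t) → w t x = 0)
    (hflux : ∀ t, 0 < t → β * fluxR J (w t) (g t) (h t) ≤ h' t)
    (hh'lim : Tendsto h' atTop (nhds 0)) :
    Tendsto (fun t => ∫ x in (g t)..(h t), w t x) atTop (nhds 0) ∧
    IntegrableOn (fun t => ∫ x in (g t)..(h t), w t x) (Set.Ioi 0) :=
  mass_tends_to_zero_general β M J g h g' h' w ginf hinf hβ hJ hJpos hgh0 hg' hh' hg'le hh'ge hglim
    hhlim hwcont hwbd hext hflux hh'lim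
end
end
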